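/- arXiv:1501.05554 — 4 statements merged into one kernel-verified Lean document; each statement's English description precedes it below -/
import Mathlib

section
/- Let Ω ⊂ ℝ² be a bounded open convex set with in-radius R_in. Then ℓ(Ω) ≤ 3·R_in, where ℓ(Ω) = inf over rotations of the vertical width of the rotated domain. Combined with the lower bound, 2·R_in ≤ ℓ(Ω) ≤ 3·R_in. -/
open Metric
open Metric

noncomputable section

/-- Rotation of the plane by angle `θ` around the point `x₀`. -/
def rot (x₀ : EuclideanSpace ℝ (Fin 2)) (θ : ℝ) (x : EuclideanSpace ℝ (Fin 2)) :
    EuclideanSpace ℝ (Fin 2) :=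
  (EuclideanSpace.equiv (Fin 2) ℝ).symm
    ![x₀ 0 + Real.cos θ * (x 0 - x₀ 0) - Real.sin θ * (x 1 - x₀ 1),
      x₀ 1 + Real.sin θ * (x 0 - x₀ 0) + Real.cos θ * (x 1 - x₀ 1)]

/-- `ℓ(Ω, x₀, θ)`: the vertical (second-coordinate) width of the rotated set `R(x₀,θ)Ω`. -/
def width (Ω : Set (EuclideanSpace ℝ (Fin 2))) (x₀ : EuclideanSpace ℝ (Fin 2)) (θ : ℝ) : ℝ :=
  sSup ((fun x => x 1) '' (rot x₀ θ '' Ω)) - sInf ((fun x => x 1) '' (rot x₀ θ '' Ω))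

/-- The in-radius `R_in = sup_{x ∈ Ω} dist(x, ∂Ω)`, expressed via the distance to `Ωᶜ`. -/
def inRadius (Ω : Set (EuclideanSpace ℝ (Fin 2))) : ℝ :=
  sSup ((fun x => infDist x Ωᶜ) '' Ω)


/-- `ℓ(Ω) = inf_{θ ∈ [0,2π)} ℓ(Ω, x₀, θ)` (independent of `x₀`). -/
def minWidth (Ω : Set (EuclideanSpace ℝ (Fin 2))) (x₀ : EuclideanSpace ℝ (Fin 2)) : ℝ :=
  sInf ((fun θ => width Ω x₀ θ) '' Set.Ico 0 (2 * Real.pi))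

/-!
The width of `Ω` in the direction of a unit vector `u` is `h u + h (-u)`, where `h` is the
support function of `Ω`, and for `c ∈ Ω` the distance `infDist c Ωᶜ` is the least gap
`h u - ⟪u, c⟫`; adding the gaps for `u` and `-u` gives `2 R_in ≤ width`.

For the upper bound let `c` be an incenter, with radius `r`. The unit normals of the supporting
lines touching the inscribed disc do not lie in an open half-plane, since otherwise moving `c`
away from them would enlarge the disc; hence `0` is a limit of convex combinations of them.
By Carathéodory three normals suffice, one of them `u` with weight `λ ≥ 1/3`, and testing the
combination against the points of `Ω` gives `λ (h u + h (-u)) ≤ r`, i.e. `width ≤ 3 r`.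
-/

open scoped RealInnerProductSpace Pointwise

section SupportFunction

variable {E : Type*} [NormedAddCommGroup E] [InnerProductSpace ℝ E] {s : Set E} {u : E}

def supportFunction (s : Set E) (u : E) : ℝ := sSup ((fun x => ⟪u, x⟫) '' s)

lemma bddAbove_inner_image (hs : Bornology.IsBounded s) (u : E) :
    BddAbove ((fun x => ⟪u, x⟫) '' s) := by
  obtain ⟨M, hM⟩ := hs.subset_closedBall 0
  refine ⟨‖u‖ * M, ?_⟩
  rintro - ⟨x, hx, rfl⟩
  have hxM : ‖x‖ ≤ M := by simpa using hM hx
  exact (real_inner_le_norm u x).trans (by gcongr)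

lemma inner_le_supportFunction (hs : Bornology.IsBounded s) {x : E} (hx : x ∈ s) (u : E) :
    ⟪u, x⟫ ≤ supportFunction s u :=
  le_csSup (bddAbove_inner_image hs u) ⟨x, hx, rfl⟩

lemma supportFunction_le (hne : s.Nonempty) {a : ℝ} (h : ∀ x ∈ s, ⟪u, x⟫ ≤ a) :
    supportFunction s u ≤ a :=
  csSup_le (hne.image _) (by rintro - ⟨x, hx, rfl⟩; exact h x hx)

lemma supportFunction_smul {t : ℝ} (ht : 0 ≤ t) (u : E) :
    supportFunction s (t • u) = t * supportFunction s u := by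
  have himage : (fun x => ⟪t • u, x⟫) '' s = t • (fun x => ⟪u, x⟫) '' s := by
    rw [← Set.image_smul, Set.image_image]
    simp only [real_inner_smul_left, smul_eq_mul]
  rw [supportFunction, himage, Real.sSup_smul_of_nonneg ht, smul_eq_mul, supportFunction]

lemma continuous_supportFunction (hs : Bornology.IsBounded s) (hne : s.Nonempty) :
    Continuous (supportFunction s) := by
  obtain ⟨M, hM0, hM⟩ := hs.subset_closedBall_lt 0 0
  refine (LipschitzWith.of_le_add_mul M.toNNReal fun u v => ?_).continuous
  refine supportFunction_le hne fun x hx => ?_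
  have hxM : ‖x‖ ≤ M := by simpa using hM hx
  calc ⟪u, x⟫ = ⟪v, x⟫ + ⟪u - v, x⟫ := by rw [inner_sub_left]; ring
    _ ≤ supportFunction s v + ‖u - v‖ * M :=
        add_le_add (inner_le_supportFunction hs hx v) ((real_inner_le_norm _ _).trans (by gcongr))
    _ = supportFunction s v + M.toNNReal * dist u v := by
        rw [Real.coe_toNNReal _ hM0.le, dist_eq_norm, mul_comm]

end SupportFunction

lemma Bornology.IsBounded.nonempty_compl {F : Type*} [NormedAddCommGroup F] [NormedSpace ℝ F]
    [Nontrivial F] {s : Set F} (hs : Bornology.IsBounded s) : sᶜ.Nonempty :=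
  Set.nonempty_compl.2 fun h => NormedSpace.unbounded_univ ℝ F (h ▸ hs)

lemma exists_forall_infDist_compl_le {X : Type*} [MetricSpace X] [ProperSpace X] {s : Set X}
    (hbdd : Bornology.IsBounded s) (hne : s.Nonempty) :
    ∃ c ∈ s, ∀ x, infDist x sᶜ ≤ infDist c sᶜ := by
  obtain ⟨m, hm, hmax⟩ := hbdd.isCompact_closure.exists_isMaxOn hne.closure
    (continuous_infDist_pt sᶜ).continuousOn
  obtain ⟨c, hc, hmc⟩ : ∃ c ∈ s, infDist m sᶜ ≤ infDist c sᶜ := by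
    by_cases hms : m ∈ s
    · exact ⟨m, hms, le_rfl⟩
    · obtain ⟨c, hc⟩ := hne
      exact ⟨c, hc, (infDist_zero_of_mem hms).trans_le infDist_nonneg⟩
  refine ⟨c, hc, fun x => ?_⟩
  by_cases hx : x ∈ closure s
  · exact (hmax hx).trans hmc
  · rw [infDist_zero_of_mem (show x ∈ sᶜ from fun h => hx (subset_closure h))]
    exact infDist_nonneg

section InscribedBall

variable {E : Type*} [NormedAddCommGroup E] [InnerProductSpace ℝ E] {s : Set E} {c u : E}

lemma infDist_compl_le_supportFunction_sub (hs : Bornology.IsBounded s) (hc : c ∈ s)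
    (hu : ‖u‖ = 1) : infDist c sᶜ ≤ supportFunction s u - ⟪u, c⟫ := by
  have hgap : 0 ≤ supportFunction s u - ⟪u, c⟫ :=
    sub_nonneg.2 (inner_le_supportFunction hs hc u)
  by_contra! hlt
  set t := (supportFunction s u - ⟪u, c⟫ + infDist c sᶜ) / 2 with ht
  have hmem : c + t • u ∈ s := by
    refine ball_infDist_compl_subset (x := c) (mem_ball'.2 ?_)
    have ht0 : 0 ≤ t := by linarith [infDist_nonneg (x := c) (s := sᶜ)]
    rw [dist_self_add_right, norm_smul, hu, mul_one, Real.norm_of_nonneg ht0]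
    linarith
  have := inner_le_supportFunction hs hmem u
  rw [inner_add_right, real_inner_smul_right, real_inner_self_eq_norm_sq, hu, one_pow,
    mul_one] at this
  linarith

lemma two_mul_infDist_compl_le_supportFunction_add_neg (hs : Bornology.IsBounded s) (hc : c ∈ s)
    (hu : ‖u‖ = 1) :
    2 * infDist c sᶜ ≤ supportFunction s u + supportFunction s (-u) := by
  have h₁ := infDist_compl_le_supportFunction_sub hs hc hu
  have h₂ := infDist_compl_le_supportFunction_sub hs hc (u := -u) (by rwa [norm_neg])
  rw [inner_neg_left] at h₂
  linarith

lemma exists_norm_eq_one_supportFunction_le [CompleteSpace E] (hs : IsOpen s)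
    (hconv : Convex ℝ s) (hne : s.Nonempty) {y : E} (hy : y ∉ s) :
    ∃ u : E, ‖u‖ = 1 ∧ supportFunction s u ≤ ⟪u, y⟫ := by
  obtain ⟨f, hf⟩ := geometric_hahn_banach_open_point hconv hs hy
  set v := (InnerProductSpace.toDual ℝ E).symm f
  have hv : ∀ x, ⟪v, x⟫ = f x := fun x => InnerProductSpace.toDual_symm_apply
  have hv0 : v ≠ 0 := by
    rintro hv0
    obtain ⟨a, ha⟩ := hne
    simpa [← hv, hv0] using hf a ha
  refine ⟨‖v‖⁻¹ • v, norm_smul_inv_norm hv0, supportFunction_le hne fun a ha => ?_⟩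
  simp only [real_inner_smul_left, hv]
  exact mul_le_mul_of_nonneg_left (hf a ha).le (by positivity)

lemma le_infDist_compl_of_forall [CompleteSpace E] [Nontrivial E] (hs : IsOpen s)
    (hconv : Convex ℝ s) (hbdd : Bornology.IsBounded s) (hne : s.Nonempty) {ρ : ℝ}
    (h : ∀ u : E, ‖u‖ = 1 → ρ ≤ supportFunction s u - ⟪u, c⟫) : ρ ≤ infDist c sᶜ := by
  refine (le_infDist hbdd.nonempty_compl).2 fun y hy => ?_
  obtain ⟨u, hu, hsu⟩ := exists_norm_eq_one_supportFunction_le hs hconv hne hy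
  calc ρ ≤ ⟪u, y⟫ - ⟪u, c⟫ := (h u hu).trans (by linarith)
    _ = ⟪u, y - c⟫ := (inner_sub_right u y c).symm
    _ ≤ dist c y := by
        simpa [hu, dist_eq_norm, norm_sub_rev] using real_inner_le_norm u (y - c)

end InscribedBall

section ContactDirections

variable {E : Type*} [NormedAddCommGroup E] [InnerProductSpace ℝ E] {s : Set E} {c : E}

/-- Unit normals of the supporting lines of `s` that touch the largest ball around `c` inside `s`
(the reverse inequality holds for every unit vector when `c ∈ s`). -/
def contactDirections (s : Set E) (c : E) : Set E :=
  {u | ‖u‖ = 1 ∧ supportFunction s u ≤ infDist c sᶜ + ⟪u, c⟫}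

/-- If a vector `d` separated `0` from the contact directions, moving `c` to `c - t • d` for
small `t > 0` would enlarge the inscribed ball. -/
theorem zero_mem_closure_convexHull_contactDirections [FiniteDimensional ℝ E] [Nontrivial E]
    (hs : IsOpen s) (hconv : Convex ℝ s) (hbdd : Bornology.IsBounded s) (hne : s.Nonempty)
    (hc : c ∈ s) (hmax : ∀ x, infDist x sᶜ ≤ infDist c sᶜ) :
    (0 : E) ∈ closure (convexHull ℝ (contactDirections s c)) := by
  set r := infDist c sᶜ
  set g := fun u : E => supportFunction s u - ⟪u, c⟫ with hg
  by_contra h0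
  obtain ⟨f, a, hfa, hf⟩ := geometric_hahn_banach_point_closed
    (convex_convexHull ℝ _).closure isClosed_closure h0
  set d := (InnerProductSpace.toDual ℝ E).symm f
  have hd : ∀ u : E, ‖u‖ = 1 → g u ≤ r → 0 < ⟪d, u⟫ := fun u hu hgu => by
    rw [InnerProductSpace.toDual_symm_apply]
    refine (map_zero f ▸ hfa).trans (hf u (subset_closure (subset_convexHull ℝ _ ⟨hu, ?_⟩)))
    simp only [hg] at hgu
    linarith
  have hgr : ∀ u : E, ‖u‖ = 1 → r ≤ g u := fun u hu =>
    infDist_compl_le_supportFunction_sub hbdd hc hu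
  obtain ⟨δ, hδ, hδle⟩ :
      ∃ δ, 0 < δ ∧ ∀ u ∈ sphere (0 : E) 1, δ ≤ max (g u - r) ⟪d, u⟫ := by
    refine (isCompact_sphere 0 1).exists_forall_le' (Continuous.continuousOn ?_) fun u hu => ?_
    · exact (((continuous_supportFunction hbdd hne).sub (continuous_id.inner continuous_const)).sub
        continuous_const).max (continuous_const.inner continuous_id)
    · rw [mem_sphere_zero_iff_norm] at hu
      rcases le_or_gt (g u) r with hgu | hgu
      · exact lt_max_of_lt_right (hd u hu hgu)
      · exact lt_max_of_lt_left (sub_pos.2 hgu)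
  set t := δ / (‖d‖ + 1)
  have ht : 0 < t := by positivity
  have htd : t * ‖d‖ < δ := by
    rw [div_mul_eq_mul_div, div_lt_iff₀ (by positivity)]
    nlinarith
  have hmove : ∀ u : E, ‖u‖ = 1 →
      r + min (δ - t * ‖d‖) (t * δ) ≤ supportFunction s u - ⟪u, c - t • d⟫ := by
    intro u hu
    have hsplit : supportFunction s u - ⟪u, c - t • d⟫ = g u + t * ⟪d, u⟫ := by
      rw [inner_sub_right, real_inner_smul_right, real_inner_comm u d]
      ring
    rw [hsplit]
    rcases le_max_iff.1 (hδle u (mem_sphere_zero_iff_norm.2 hu)) with h | h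
    · have hdu : -‖d‖ ≤ ⟪d, u⟫ := by
        simpa [hu] using neg_le_of_abs_le (abs_real_inner_le_norm d u)
      nlinarith [min_le_left (δ - t * ‖d‖) (t * δ)]
    · nlinarith [min_le_right (δ - t * ‖d‖) (t * δ), hgr u hu]
  have hle := (le_infDist_compl_of_forall hs hconv hbdd hne hmove).trans (hmax (c - t • d))
  have hgain : 0 < min (δ - t * ‖d‖) (t * δ) := lt_min (by linarith) (by positivity)
  linarith

end ContactDirections

section Caratheodory

universe u

variable {E : Type u} [NormedAddCommGroup E] [InnerProductSpace ℝ E] [FiniteDimensional ℝ E]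

/-- Carathéodory: at most `finrank ℝ E + 1` points are needed, so one weight is at least
`1 / (finrank ℝ E + 1)`. -/
theorem exists_convexCombination_with_large_weight {t : Set E} {x : E} (hx : x ∈ convexHull ℝ t) :
    ∃ (ι : Type u) (_ : Fintype ι) (z : ι → E) (w : ι → ℝ), Set.range z ⊆ t ∧
      (∀ i, 0 ≤ w i) ∧ ∑ i, w i = 1 ∧ ∑ i, w i • z i = x ∧
      ∃ i, 1 ≤ (Module.finrank ℝ E + 1) * w i := by
  obtain ⟨ι, _, z, w, hzt, hz, hw, hw1, hwx⟩ := eq_pos_convex_span_of_mem_convexHull hx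
  refine ⟨ι, inferInstance, z, w, hzt, fun i => (hw i).le, hw1, hwx, ?_⟩
  have hcard : (Fintype.card ι : ℝ) ≤ Module.finrank ℝ E + 1 := by
    have := hz.card_le_finrank_succ.trans (Nat.succ_le_succ (Submodule.finrank_le _))
    exact_mod_cast this
  have hι : (Finset.univ : Finset ι).Nonempty := by
    by_contra h
    simp [Finset.not_nonempty_iff_eq_empty.1 h] at hw1
  obtain ⟨i, -, hi⟩ := Finset.exists_le_of_sum_le
    (f := fun _ => 1 / (Module.finrank ℝ E + 1 : ℝ)) (g := w) hι <| by
      rw [hw1, Finset.sum_const, Finset.card_univ, nsmul_eq_mul, mul_one_div,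
        div_le_one (by positivity)]
      exact hcard
  exact ⟨i, by rwa [div_le_iff₀' (by positivity)] at hi⟩

end Caratheodory

section WidthBound

variable {E : Type*} [NormedAddCommGroup E] [InnerProductSpace ℝ E] {s : Set E} {c : E}

/-- Weighting the gaps `r - ⟪z j, x - c⟫ ≥ 0` by `w j` and summing gives
`r - ⟪∑ w j • z j, x - c⟫`, which bounds the single term for `j = i`. -/
lemma mul_supportFunction_add_neg_le {ι : Type*} [Fintype ι] (hbdd : Bornology.IsBounded s)
    (hne : s.Nonempty) {r D : ℝ} (hD : s ⊆ closedBall c D) {z : ι → E} {w : ι → ℝ}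
    (hw : ∀ i, 0 ≤ w i) (hw1 : ∑ i, w i = 1) (hz : ∀ i, supportFunction s (z i) ≤ r + ⟪z i, c⟫)
    (i : ι) :
    w i * (supportFunction s (z i) + supportFunction s (-z i)) ≤ r + ‖∑ j, w j • z j‖ * D := by
  set p := ∑ j, w j • z j
  have hneg : w i * supportFunction s (-z i) ≤ r + ‖p‖ * D - w i * (r + ⟪z i, c⟫) := by
    rw [← supportFunction_smul (hw i)]
    refine supportFunction_le hne fun x hx => ?_
    have hterm : ∀ j, 0 ≤ w j * (r - ⟪z j, x - c⟫) := fun j => by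
      have := inner_le_supportFunction hbdd hx (z j)
      exact mul_nonneg (hw j) (by rw [inner_sub_right]; linarith [hz j])
    have hsum : ∑ j, w j * (r - ⟪z j, x - c⟫) = r - ⟪p, x - c⟫ := by
      simp only [p, mul_sub, Finset.sum_sub_distrib, ← Finset.sum_mul, hw1, sum_inner,
        real_inner_smul_left, one_mul]
    have hp : -⟪p, x - c⟫ ≤ ‖p‖ * D := by
      rw [← inner_neg_right, neg_sub]
      exact (real_inner_le_norm _ _).trans (by gcongr; exact mem_closedBall_iff_norm'.1 (hD hx))
    have hi := Finset.single_le_sum (fun j _ => hterm j) (Finset.mem_univ i)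
    rw [hsum, inner_sub_right] at hi
    rw [real_inner_smul_left, inner_neg_left]
    linear_combination hi + hp
  have hplus := mul_le_mul_of_nonneg_left (hz i) (hw i)
  linarith

theorem exists_supportFunction_add_neg_le [FiniteDimensional ℝ E] [Nontrivial E]
    (hs : IsOpen s) (hconv : Convex ℝ s) (hbdd : Bornology.IsBounded s) (hne : s.Nonempty)
    (hc : c ∈ s) (hmax : ∀ x, infDist x sᶜ ≤ infDist c sᶜ) {η : ℝ} (hη : 0 < η) :
    ∃ u : E, ‖u‖ = 1 ∧ supportFunction s u + supportFunction s (-u) ≤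
      (Module.finrank ℝ E + 1) * infDist c sᶜ + η := by
  set n : ℝ := Module.finrank ℝ E + 1
  obtain ⟨D, hD0, hD⟩ := hbdd.subset_closedBall_lt 0 c
  obtain ⟨p, hp, hpη⟩ := Metric.mem_closure_iff.1
    (zero_mem_closure_convexHull_contactDirections hs hconv hbdd hne hc hmax) (η / (n * D))
    (by positivity)
  obtain ⟨ι, _, z, w, hzU, hw, hw1, hwp, i, hi⟩ := exists_convexCombination_with_large_weight hp
  have hzi : ‖z i‖ = 1 := (hzU ⟨i, rfl⟩).1
  refine ⟨z i, hzi, ?_⟩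
  have hwidth :=
    mul_supportFunction_add_neg_le hbdd hne hD hw hw1 (fun j => (hzU ⟨j, rfl⟩).2) i
  rw [hwp] at hwidth
  have hpD : n * (‖p‖ * D) ≤ η := by
    rw [dist_zero_left, lt_div_iff₀ (by positivity)] at hpη
    linarith
  have hW := two_mul_infDist_compl_le_supportFunction_add_neg hbdd hc hzi
  calc supportFunction s (z i) + supportFunction s (-z i)
      ≤ n * w i * (supportFunction s (z i) + supportFunction s (-z i)) :=
        le_mul_of_one_le_left (by linarith [infDist_nonneg (x := c) (s := sᶜ)]) hi
    _ ≤ n * (infDist c sᶜ + ‖p‖ * D) := by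
        rw [mul_assoc]; gcongr
    _ ≤ n * infDist c sᶜ + η := by linarith

end WidthBound

section Plane

local notation "E2" => EuclideanSpace ℝ (Fin 2)

def dirVec (θ : ℝ) : E2 := !₂[Real.sin θ, Real.cos θ]

lemma norm_dirVec (θ : ℝ) : ‖dirVec θ‖ = 1 := by
  rw [EuclideanSpace.norm_eq, Fin.sum_univ_two, Real.sqrt_eq_one]
  simp [dirVec, Real.sin_sq_add_cos_sq]

lemma rot_apply_one (x₀ : E2) (θ : ℝ) (x : E2) :
    rot x₀ θ x 1 = ⟪dirVec θ, x⟫ + (x₀ 1 - ⟪dirVec θ, x₀⟫) := by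
  change x₀ 1 + Real.sin θ * (x 0 - x₀ 0) + Real.cos θ * (x 1 - x₀ 1) = _
  simp only [dirVec, PiLp.inner_apply, Fin.sum_univ_two, RCLike.inner_apply, conj_trivial,
    Matrix.cons_val_zero, Matrix.cons_val_one, Matrix.cons_val_fin_one]
  ring

lemma width_eq_supportFunction {Ω : Set E2} (hbdd : Bornology.IsBounded Ω) (hne : Ω.Nonempty)
    (x₀ : E2) (θ : ℝ) :
    width Ω x₀ θ = supportFunction Ω (dirVec θ) + supportFunction Ω (-dirVec θ) := by
  set C := x₀ 1 - ⟪dirVec θ, x₀⟫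
  set A := (fun x => ⟪dirVec θ, x⟫) '' Ω
  have himage : (fun x : E2 => x 1) '' (rot x₀ θ '' Ω) = OrderIso.addRight C '' A := by
    simp only [A, Set.image_image, rot_apply_one, OrderIso.addRight_apply]
    rfl
  have hneg : -A = (fun x => ⟪-dirVec θ, x⟫) '' Ω := by
    rw [← Set.image_neg_eq_neg, Set.image_image]
    simp only [inner_neg_left]
  have hA : A.Nonempty := hne.image _
  have hAbdd : BddAbove A := bddAbove_inner_image hbdd _
  have hAbdd' : BddBelow A := by
    rw [← bddAbove_neg, hneg]; exact bddAbove_inner_image hbdd _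
  rw [width, himage, ← OrderIso.map_csSup' _ hA hAbdd, ← OrderIso.map_csInf' _ hA hAbdd',
    OrderIso.addRight_apply, OrderIso.addRight_apply, Real.sInf_def, hneg]
  simp only [supportFunction, A]
  ring

lemma exists_dirVec_eq {u : E2} (hu : ‖u‖ = 1) :
    ∃ θ ∈ Set.Ico 0 (2 * Real.pi), dirVec θ = u := by
  obtain ⟨φ, hφ⟩ := (Complex.norm_eq_one_iff ⟨u 1, u 0⟩).1 <| by
    rw [EuclideanSpace.norm_eq, Fin.sum_univ_two, Real.sqrt_eq_one] at hu
    rw [Complex.norm_def, Complex.normSq_mk, Real.sqrt_eq_one]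
    simpa [add_comm, sq] using hu
  have hcos : Real.cos φ = u 1 := by simpa using congrArg Complex.re hφ
  have hsin : Real.sin φ = u 0 := by simpa using congrArg Complex.im hφ
  refine ⟨toIcoMod Real.two_pi_pos 0 φ, by simpa using toIcoMod_mem_Ico Real.two_pi_pos 0 φ, ?_⟩
  have hmod :
      toIcoMod Real.two_pi_pos 0 φ = φ - toIcoDiv Real.two_pi_pos 0 φ * (2 * Real.pi) := by
    rw [← self_sub_toIcoDiv_zsmul, zsmul_eq_mul]
  ext i
  fin_cases i
  · change Real.sin _ = u 0
    rw [hmod, Real.sin_sub_int_mul_two_pi, hsin]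
  · change Real.cos _ = u 1
    rw [hmod, Real.cos_sub_int_mul_two_pi, hcos]

end Plane

theorem stmt_3_general (Ω : Set (EuclideanSpace ℝ (Fin 2))) (hΩ : IsOpen Ω)
    (hbdd : Bornology.IsBounded Ω) (hconv : Convex ℝ Ω) (hne : Ω.Nonempty)
    (x₀ : EuclideanSpace ℝ (Fin 2)) :
    2 * inRadius Ω ≤ minWidth Ω x₀ ∧ minWidth Ω x₀ ≤ 3 * inRadius Ω := by
  obtain ⟨c, hc, hmax⟩ := exists_forall_infDist_compl_le hbdd hne
  have hr : inRadius Ω = infDist c Ωᶜ :=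
    IsGreatest.csSup_eq ⟨⟨c, hc, rfl⟩, by rintro - ⟨x, -, rfl⟩; exact hmax x⟩
  have hlow : ∀ θ, 2 * inRadius Ω ≤ width Ω x₀ θ := fun θ => by
    rw [hr, width_eq_supportFunction hbdd hne]
    exact two_mul_infDist_compl_le_supportFunction_add_neg hbdd hc (norm_dirVec θ)
  refine ⟨le_csInf ⟨_, 0, ⟨le_rfl, Real.two_pi_pos⟩, rfl⟩ ?_, ?_⟩
  · rintro - ⟨θ, -, rfl⟩
    exact hlow θ
  refine le_of_forall_pos_le_add fun η hη => ?_
  obtain ⟨u, hu, hwidth⟩ := exists_supportFunction_add_neg_le hΩ hconv hbdd hne hc hmax hη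
  obtain ⟨θ, hθ, rfl⟩ := exists_dirVec_eq hu
  rw [finrank_euclideanSpace_fin, Nat.cast_ofNat] at hwidth
  calc minWidth Ω x₀ ≤ width Ω x₀ θ :=
        csInf_le ⟨_, by rintro - ⟨θ, -, rfl⟩; exact hlow θ⟩ ⟨θ, hθ, rfl⟩
    _ ≤ 3 * inRadius Ω + η := by
        rw [width_eq_supportFunction hbdd hne, hr]
        linarith

theorem stmt_3 (Ω : Set (EuclideanSpace ℝ (Fin 2))) (hΩ : IsOpen Ω)
    (hbdd : Bornology.IsBounded Ω) (hconv : Convex ℝ Ω) (hne : Ω.Nonempty)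
    (x₀ : EuclideanSpace ℝ (Fin 2)) (hx₀ : x₀ ∈ Ω) :
    2 * inRadius Ω ≤ minWidth Ω x₀ ∧ minWidth Ω x₀ ≤ 3 * inRadius Ω :=
  stmt_3_general Ω hΩ hbdd hconv hne x₀

end
end

section
/- Let Ω ⊂ ℝ² be open, Ψ : Ω → ℝ smooth, A := (−∂₂Ψ, ∂₁Ψ), and B := ΔΨ. Then for every u ∈ C_c^∞(Ω;ℂ), writing u = v·e^{−Ψ}, one has the ground state representation ∫_Ω |(−i∇ + A)u|² dx − ∫_Ω B|u|² dx = ∫_Ω e^{−2Ψ} |(−i∂₁ − ∂₂)v|² dx. -/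
open MeasureTheory

noncomputable section

/-- The `i`-th partial derivative of a complex-valued function on `ℝ²`. -/
def pd (i : Fin 2) (f : EuclideanSpace ℝ (Fin 2) → ℂ) (x : EuclideanSpace ℝ (Fin 2)) : ℂ :=
  fderiv ℝ f x (EuclideanSpace.single i 1)

/-- The `i`-th partial derivative of a real-valued function on `ℝ²`. -/
def pdR (i : Fin 2) (f : EuclideanSpace ℝ (Fin 2) → ℝ) (x : EuclideanSpace ℝ (Fin 2)) : ℝ :=
  fderiv ℝ f x (EuclideanSpace.single i 1)

section Aux

open Metric Function Complex ComplexConjugate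

local notation "E2" => EuclideanSpace ℝ (Fin 2)

/-- Integral of a directional derivative of a compactly supported smooth function vanishes. -/
theorem key_real (f : E2 → ℝ) (hf : ContDiff ℝ (⊤ : ℕ∞) f) (hcs : HasCompactSupport f)
    (v : E2) : ∫ x, fderiv ℝ f x v = 0 := by
  obtain ⟨C, hC⟩ : ∃ C, LipschitzWith C f :=
    hf.lipschitzWith_of_hasCompactSupport hcs (by simp)
  obtain ⟨R, hR0, hRs⟩ : ∃ R, 0 < R ∧ tsupport f ⊆ closedBall 0 R := by
    rcases hcs.isBounded.subset_closedBall 0 with ⟨R, hR⟩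
    exact ⟨max R 1, lt_of_lt_of_le one_pos (le_max_right _ _),
      hR.trans (closedBall_subset_closedBall (le_max_left _ _))⟩
  set g : ContDiffBump (0 : E2) := ⟨R + 1, R + 2, by positivity, by linarith⟩
  obtain ⟨D, hD⟩ : ∃ D, LipschitzWith D (g : E2 → ℝ) :=
    g.contDiff.lipschitzWith_of_hasCompactSupport (n := 1) g.hasCompactSupport (by simp)
  have h1 : ∫ x, lineDeriv ℝ f x v * g x = ∫ x, lineDeriv ℝ (g : E2 → ℝ) x (-v) * f x :=
    hC.integral_lineDeriv_mul_eq hD g.hasCompactSupport v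
  have h2 : ∀ x, lineDeriv ℝ (g : E2 → ℝ) x (-v) * f x = 0 := by
    intro x
    by_cases hx : x ∈ tsupport f
    · have hg1 : (g : E2 → ℝ) =ᶠ[nhds x] (fun _ => 1) := by
        filter_upwards [ball_mem_nhds x one_pos] with y hy
        apply g.one_of_mem_closedBall
        have : x ∈ closedBall (0:E2) R := hRs hx
        simp only [mem_ball, mem_closedBall] at *
        have := dist_triangle y x 0
        linarith
      have : lineDeriv ℝ (g : E2 → ℝ) x (-v) = lineDeriv ℝ (fun _ : E2 => (1:ℝ)) x (-v) :=
        hg1.lineDeriv_eq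
      rw [this]
      simp [lineDeriv]
    · have : f x = 0 := image_eq_zero_of_notMem_tsupport hx
      rw [this, mul_zero]
  have h3 : ∀ x, lineDeriv ℝ f x v * g x = fderiv ℝ f x v := by
    intro x
    rw [(hf.differentiable (by simp) x).lineDeriv_eq_fderiv]
    by_cases hx : x ∈ tsupport f
    · rw [g.one_of_mem_closedBall]
      · ring
      · exact closedBall_subset_closedBall (show R ≤ R+1 by linarith) (hRs hx)
    · have : fderiv ℝ f x = 0 := by
        by_contra h
        exact hx (support_fderiv_subset ℝ h)
      simp [this]
  rw [← funext h3, h1, funext h2]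
  simp

variable {u : E2 → ℂ} {Ψ : E2 → ℝ} {f g : E2 → ℂ}

theorem contDiff_pd (hu : ContDiff ℝ (⊤ : ℕ∞) u) (i : Fin 2) : ContDiff ℝ (⊤ : ℕ∞) (pd i u) :=
  (hu.fderiv_right (by simp)).clm_apply contDiff_const

theorem contDiff_pdR (hΨ : ContDiff ℝ (⊤ : ℕ∞) Ψ) (i : Fin 2) : ContDiff ℝ (⊤ : ℕ∞) (pdR i Ψ) :=
  (hΨ.fderiv_right (by simp)).clm_apply contDiff_const

theorem pd_mul (hf : ContDiff ℝ (⊤ : ℕ∞) f) (hg : ContDiff ℝ (⊤ : ℕ∞) g) (i : Fin 2) (x : E2) :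
    pd i (fun y => f y * g y) x = pd i f x * g x + f x * pd i g x := by
  have h : fderiv ℝ (fun y => f y * g y) x = _ := ((hf.differentiable (by simp) x).hasFDerivAt.mul
    (hg.differentiable (by simp) x).hasFDerivAt).fderiv
  simp only [pd, h, ContinuousLinearMap.add_apply, ContinuousLinearMap.coe_smul',
    Pi.smul_apply, smul_eq_mul]
  ring

theorem pd_exp (hΨ : ContDiff ℝ (⊤ : ℕ∞) Ψ) (i : Fin 2) (x : E2) :
    pd i (fun y => Complex.exp (Ψ y)) x = (pdR i Ψ x : ℂ) * Complex.exp (Ψ x) := by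
  have h1 : HasFDerivAt (fun y : E2 => (Ψ y : ℂ))
      (Complex.ofRealCLM.comp (fderiv ℝ Ψ x)) x :=
    Complex.ofRealCLM.hasFDerivAt.comp x (hΨ.differentiable (by simp) x).hasFDerivAt
  have h2 := h1.cexp.fderiv
  simp only [pd, pdR, h2, ContinuousLinearMap.coe_smul', Pi.smul_apply,
    ContinuousLinearMap.coe_comp', Function.comp_apply, Complex.ofRealCLM_apply, smul_eq_mul]
  ring

theorem pd_conj (hf : ContDiff ℝ (⊤ : ℕ∞) f) (i : Fin 2) (x : E2) :
    pd i (fun y => (starRingEnd ℂ) (f y)) x = (starRingEnd ℂ) (pd i f x) := by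
  have h : HasFDerivAt (fun y => (starRingEnd ℂ) (f y))
      ((Complex.conjCLE : ℂ →L[ℝ] ℂ).comp (fderiv ℝ f x)) x :=
    (Complex.conjCLE : ℂ →L[ℝ] ℂ).hasFDerivAt.comp x (hf.differentiable (by simp) x).hasFDerivAt
  simp only [pd, h.fderiv, ContinuousLinearMap.coe_comp', Function.comp_apply]
  rfl

theorem pdR_re (hf : ContDiff ℝ (⊤ : ℕ∞) f) (i : Fin 2) (x : E2) :
    pdR i (fun y => (f y).re) x = (pd i f x).re := by
  have h : HasFDerivAt (fun y => (f y).re) (Complex.reCLM.comp (fderiv ℝ f x)) x :=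
    Complex.reCLM.hasFDerivAt.comp x (hf.differentiable (by simp) x).hasFDerivAt
  simp only [pdR, pd, h.fderiv, ContinuousLinearMap.coe_comp', Function.comp_apply,
    Complex.reCLM_apply]

theorem pdR_im (hf : ContDiff ℝ (⊤ : ℕ∞) f) (i : Fin 2) (x : E2) :
    pdR i (fun y => (f y).im) x = (pd i f x).im := by
  have h : HasFDerivAt (fun y => (f y).im) (Complex.imCLM.comp (fderiv ℝ f x)) x :=
    Complex.imCLM.hasFDerivAt.comp x (hf.differentiable (by simp) x).hasFDerivAt
  simp only [pdR, pd, h.fderiv, ContinuousLinearMap.coe_comp', Function.comp_apply,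
    Complex.imCLM_apply]

theorem pdR_mul (hf : ContDiff ℝ (⊤ : ℕ∞) Ψ) {φ : E2 → ℝ} (hg : ContDiff ℝ (⊤ : ℕ∞) φ) (i : Fin 2) (x : E2) :
    pdR i (fun y => Ψ y * φ y) x = pdR i Ψ x * φ x + Ψ x * pdR i φ x := by
  have h : fderiv ℝ (fun y => Ψ y * φ y) x = _ := ((hf.differentiable (by simp) x).hasFDerivAt.mul
    (hg.differentiable (by simp) x).hasFDerivAt).fderiv
  simp only [pdR, h, ContinuousLinearMap.add_apply, ContinuousLinearMap.coe_smul',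
    Pi.smul_apply, smul_eq_mul]
  ring

theorem pdR_sub {φ χ : E2 → ℝ} (hf : ContDiff ℝ (⊤ : ℕ∞) φ) (hg : ContDiff ℝ (⊤ : ℕ∞) χ) (i : Fin 2) (x : E2) :
    pdR i (fun y => φ y - χ y) x = pdR i φ x - pdR i χ x := by
  simp only [pdR, fderiv_fun_sub (hf.differentiable (by simp) x) (hg.differentiable (by simp) x),
    ContinuousLinearMap.coe_sub', Pi.sub_apply]

theorem pdR_neg {φ : E2 → ℝ} (i : Fin 2) (x : E2) :
    pdR i (fun y => -(φ y)) x = -(pdR i φ x) := by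
  simp only [pdR, fderiv_fun_neg, ContinuousLinearMap.neg_apply]

theorem pd_symm (hu : ContDiff ℝ (⊤ : ℕ∞) u) (x : E2) :
    pd 0 (pd 1 u) x = pd 1 (pd 0 u) x := by
  have hd : Differentiable ℝ (fderiv ℝ u) := (hu.fderiv_right (m := 1) (WithTop.coe_le_coe.mpr le_top)).differentiable (by simp)
  have hsym := (hu.contDiffAt (x := x)).isSymmSndFDerivAt (n := (⊤ : ℕ∞)) (by rw [minSmoothness_of_isRCLikeNormedField]; exact WithTop.coe_le_coe.mpr (le_top : (2:ℕ∞) ≤ ⊤))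
  have key : ∀ i j : Fin 2, pd i (pd j u) x =
      fderiv ℝ (fderiv ℝ u) x (EuclideanSpace.single i 1) (EuclideanSpace.single j 1) := by
    intro i j
    have h := fderiv_clm_apply (hd x) (differentiableAt_const (EuclideanSpace.single j (1:ℝ)))
    show fderiv ℝ (fun y => (fderiv ℝ u y) (EuclideanSpace.single j 1)) x
      (EuclideanSpace.single i 1) = _
    rw [h]
    simp
  rw [key 0 1, key 1 0, hsym]

theorem sqnorm (z : ℂ) : ‖z‖^2 = z.re*z.re + z.im*z.im := by
  rw [Complex.sq_norm, Complex.normSq_apply]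

theorem alg (a d0 d1 m : ℂ) (p0 p1 p00 p11 : ℝ) :
    (‖-Complex.I * d0 + ((-p1 : ℝ):ℂ) * a‖^2 + ‖-Complex.I * d1 + ((p0:ℝ):ℂ) * a‖^2)
      - (p00 + p11) * ‖a‖^2
      - ‖-Complex.I * (d0 + (p0:ℝ) * a) - (d1 + (p1:ℝ) * a)‖^2
    = ((d0 * conj d1).im + (a * conj m).im
        - (p00 * ((a * conj a).re) + p0 * ((d0 * conj a + a * conj d0).re)))
      + (-((d1 * conj d0).im + (a * conj m).im)
        - (p11 * ((a * conj a).re) + p1 * ((d1 * conj a + a * conj d1).re))) := by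
  simp only [sqnorm, Complex.mul_re, Complex.mul_im, Complex.add_re, Complex.add_im,
    Complex.sub_re, Complex.sub_im, Complex.neg_re, Complex.neg_im, Complex.I_re, Complex.I_im,
    Complex.ofReal_re, Complex.ofReal_im, Complex.conj_re, Complex.conj_im]
  ring

end Aux

open Complex ComplexConjugate in
theorem stmt_11 (Ω : Set (EuclideanSpace ℝ (Fin 2))) (hΩ : IsOpen Ω)
    (Ψ : EuclideanSpace ℝ (Fin 2) → ℝ) (hΨ : ContDiff ℝ (⊤ : ℕ∞) Ψ)
    (u : EuclideanSpace ℝ (Fin 2) → ℂ) (hu : ContDiff ℝ (⊤ : ℕ∞) u)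
    (hcs : HasCompactSupport u) (hsupp : tsupport u ⊆ Ω) :
    (∫ x in Ω,
        (‖-Complex.I * pd 0 u x + ((-(pdR 1 Ψ x) : ℝ) : ℂ) * u x‖ ^ 2 +
          ‖-Complex.I * pd 1 u x + ((pdR 0 Ψ x : ℝ) : ℂ) * u x‖ ^ 2)) -
      (∫ x in Ω, (pdR 0 (pdR 0 Ψ) x + pdR 1 (pdR 1 Ψ) x) * ‖u x‖ ^ 2) =
    ∫ x in Ω, Real.exp (-2 * Ψ x) *
      ‖-Complex.I * pd 0 (fun y => u y * Complex.exp (Ψ y)) x -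
        pd 1 (fun y => u y * Complex.exp (Ψ y)) x‖ ^ 2 := by
  set v : EuclideanSpace ℝ (Fin 2) → ℂ := fun y => u y * Complex.exp (Ψ y) with hv
  set f1 : EuclideanSpace ℝ (Fin 2) → ℝ := fun x =>
    ‖-Complex.I * pd 0 u x + ((-(pdR 1 Ψ x) : ℝ) : ℂ) * u x‖ ^ 2 +
      ‖-Complex.I * pd 1 u x + ((pdR 0 Ψ x : ℝ) : ℂ) * u x‖ ^ 2 with hf1
  set f2 : EuclideanSpace ℝ (Fin 2) → ℝ := fun x =>
    (pdR 0 (pdR 0 Ψ) x + pdR 1 (pdR 1 Ψ) x) * ‖u x‖ ^ 2 with hf2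
  set f3 : EuclideanSpace ℝ (Fin 2) → ℝ := fun x =>
    Real.exp (-2 * Ψ x) * ‖-Complex.I * pd 0 v x - pd 1 v x‖ ^ 2 with hf3
  -- basic smoothness
  have hexp : ContDiff ℝ (⊤ : ℕ∞) (fun y : EuclideanSpace ℝ (Fin 2) => Complex.exp (Ψ y)) :=
    (Complex.ofRealCLM.contDiff.comp hΨ).cexp
  have hvs : ContDiff ℝ (⊤ : ℕ∞) v := hu.mul hexp
  have hconj : ∀ g : EuclideanSpace ℝ (Fin 2) → ℂ, ContDiff ℝ (⊤ : ℕ∞) g →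
      ContDiff ℝ (⊤ : ℕ∞) (fun y => (starRingEnd ℂ) (g y)) := fun g hg =>
    (Complex.conjCLE : ℂ →L[ℝ] ℂ).contDiff.comp hg
  -- vanishing outside tsupport u
  have hvt : tsupport v ⊆ tsupport u := closure_mono (Function.support_mul_subset_left _ _)
  have hout : ∀ x ∉ tsupport u, u x = 0 ∧ (∀ i, pd i u x = 0) ∧ (∀ i, pd i v x = 0) := by
    intro x hx
    refine ⟨image_eq_zero_of_notMem_tsupport hx, fun i => ?_, fun i => ?_⟩
    · have : fderiv ℝ u x = 0 := by
        by_contra h; exact hx (support_fderiv_subset ℝ h)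
      simp [pd, this]
    · have : fderiv ℝ v x = 0 := by
        by_contra h; exact hx (hvt (support_fderiv_subset ℝ h))
      simp [pd, this]
  have hout1 : ∀ x ∉ tsupport u, f1 x = 0 := by
    intro x hx
    obtain ⟨h0, h1, _⟩ := hout x hx
    simp [hf1, h0, h1 0, h1 1]
  have hout2 : ∀ x ∉ tsupport u, f2 x = 0 := by
    intro x hx
    simp [hf2, (hout x hx).1]
  have hout3 : ∀ x ∉ tsupport u, f3 x = 0 := by
    intro x hx
    obtain ⟨_, _, h2⟩ := hout x hx
    simp [hf3, h2 0, h2 1]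
  -- continuity of integrands
  have hpdRc : ∀ i, Continuous (pdR i Ψ) := fun i => (contDiff_pdR hΨ i).continuous
  have hc1 : Continuous f1 :=
    (((continuous_const.mul (contDiff_pd hu 0).continuous).add
        ((Complex.continuous_ofReal.comp (hpdRc 1).neg).mul hu.continuous)).norm.pow 2).add
      (((continuous_const.mul (contDiff_pd hu 1).continuous).add
        ((Complex.continuous_ofReal.comp (hpdRc 0)).mul hu.continuous)).norm.pow 2)
  have hc2 : Continuous f2 := by
    apply Continuous.mul
    · exact ((contDiff_pdR (contDiff_pdR hΨ 0) 0).continuous).add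
        ((contDiff_pdR (contDiff_pdR hΨ 1) 1).continuous)
    · exact (hu.continuous.norm).pow 2
  have hc3 : Continuous f3 := by
    apply Continuous.mul
    · exact Real.continuous_exp.comp (continuous_const.mul hΨ.continuous)
    · exact (((continuous_const.mul (contDiff_pd hvs 0).continuous).sub
        (contDiff_pd hvs 1).continuous).norm).pow 2
  -- set integrals to full integrals
  have hnotΩ : ∀ x ∉ Ω, x ∉ tsupport u := fun x hx hxt => hx (hsupp hxt)
  rw [show (∫ x in Ω, f1 x) = ∫ x, f1 x from
      setIntegral_eq_integral_of_forall_compl_eq_zero (fun x hx => hout1 x (hnotΩ x hx)),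
    show (∫ x in Ω, f2 x) = ∫ x, f2 x from
      setIntegral_eq_integral_of_forall_compl_eq_zero (fun x hx => hout2 x (hnotΩ x hx)),
    show (∫ x in Ω, f3 x) = ∫ x, f3 x from
      setIntegral_eq_integral_of_forall_compl_eq_zero (fun x hx => hout3 x (hnotΩ x hx))]
  -- integrability
  have hi1 : Integrable f1 := hc1.integrable_of_hasCompactSupport
    (HasCompactSupport.intro hcs hout1)
  have hi2 : Integrable f2 := hc2.integrable_of_hasCompactSupport
    (HasCompactSupport.intro hcs hout2)
  have hi3 : Integrable f3 := hc3.integrable_of_hasCompactSupport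
    (HasCompactSupport.intro hcs hout3)
  -- the divergence fields
  set N : EuclideanSpace ℝ (Fin 2) → ℝ := fun y => (u y * conj (u y)).re with hN
  set H0 : EuclideanSpace ℝ (Fin 2) → ℝ := fun y =>
    (u y * conj (pd 1 u y)).im - pdR 0 Ψ y * N y with hH0
  set H1 : EuclideanSpace ℝ (Fin 2) → ℝ := fun y =>
    -((u y * conj (pd 0 u y)).im) - pdR 1 Ψ y * N y with hH1
  have hNs : ContDiff ℝ (⊤ : ℕ∞) N := by
    exact Complex.reCLM.contDiff.comp (hu.mul (hconj u hu))
  have him1 : ContDiff ℝ (⊤ : ℕ∞) (fun y => (u y * conj (pd 1 u y)).im) := by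
    exact Complex.imCLM.contDiff.comp (hu.mul (hconj _ (contDiff_pd hu 1)))
  have him0 : ContDiff ℝ (⊤ : ℕ∞) (fun y => (u y * conj (pd 0 u y)).im) := by
    exact Complex.imCLM.contDiff.comp (hu.mul (hconj _ (contDiff_pd hu 0)))
  have hH0s : ContDiff ℝ (⊤ : ℕ∞) H0 := him1.sub ((contDiff_pdR hΨ 0).mul hNs)
  have hH1s : ContDiff ℝ (⊤ : ℕ∞) H1 := him0.neg.sub ((contDiff_pdR hΨ 1).mul hNs)
  have hH0cs : HasCompactSupport H0 := HasCompactSupport.intro hcs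
    (fun x hx => by simp [hH0, hN, (hout x hx).1])
  have hH1cs : HasCompactSupport H1 := HasCompactSupport.intro hcs
    (fun x hx => by simp [hH1, hN, (hout x hx).1])
  -- pointwise divergence identity
  have hdiv : ∀ x, f1 x - f2 x - f3 x = pdR 0 H0 x + pdR 1 H1 x := by
    intro x
    set a := u x
    set d0 := pd 0 u x
    set d1 := pd 1 u x
    set m := pd 0 (pd 1 u) x with hm
    set p0 := pdR 0 Ψ x
    set p1 := pdR 1 Ψ x
    -- expand f3
    have hpdv : ∀ i, pd i v x = (pd i u x + (pdR i Ψ x : ℂ) * u x) * Complex.exp (Ψ x) := by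
      intro i
      rw [hv, pd_mul hu hexp i x, pd_exp hΨ i x]
      ring
    have hf3x : f3 x = ‖-Complex.I * (d0 + (p0:ℝ) * a) - (d1 + (p1:ℝ) * a)‖^2 := by
      have hrw : -Complex.I * pd 0 v x - pd 1 v x =
          (-Complex.I * (d0 + (p0:ℝ) * a) - (d1 + (p1:ℝ) * a)) * Complex.exp (Ψ x) := by
        rw [hpdv 0, hpdv 1]; ring
      have hne : ‖(Complex.exp ((Ψ x : ℂ)))‖ = Real.exp (Ψ x) := by
        rw [Complex.norm_exp_ofReal]
      have he1 : Real.exp (-2 * Ψ x) * (Real.exp (Ψ x))^2 = 1 := by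
        rw [sq, ← Real.exp_add, ← Real.exp_add]
        rw [show -2 * Ψ x + (Ψ x + Ψ x) = 0 by ring, Real.exp_zero]
      rw [hf3]
      show Real.exp (-2 * Ψ x) * ‖-Complex.I * pd 0 v x - pd 1 v x‖ ^ 2 = _
      rw [hrw, norm_mul, mul_pow, hne, ← mul_assoc, mul_comm (Real.exp (-2*Ψ x)), mul_assoc,
        he1, mul_one]
    -- expand pdR 0 H0
    have hG0 : pd 0 (fun y => u y * conj (pd 1 u y)) x = d0 * conj d1 + a * conj m := by
      rw [pd_mul hu (hconj _ (contDiff_pd hu 1)) 0 x, pd_conj (contDiff_pd hu 1) 0 x]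
    have hG1 : pd 1 (fun y => u y * conj (pd 0 u y)) x = d1 * conj d0 + a * conj m := by
      rw [pd_mul hu (hconj _ (contDiff_pd hu 0)) 1 x, pd_conj (contDiff_pd hu 0) 1 x,
        ← pd_symm hu x]
    have hpN : ∀ i, pdR i N x = (pd i u x * conj a + a * conj (pd i u x)).re := by
      intro i
      rw [hN]
      rw [pdR_re (hu.mul (hconj u hu)) i x, pd_mul hu (hconj u hu) i x, pd_conj hu i x]
    have hL0 : pdR 0 H0 x = (d0 * conj d1).im + (a * conj m).im
        - (pdR 0 (pdR 0 Ψ) x * N x + p0 * ((d0 * conj a + a * conj d0).re)) := by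
      rw [hH0]
      rw [pdR_sub him1 ((contDiff_pdR hΨ 0).mul hNs) 0 x]
      rw [show (fun y => (u y * conj (pd 1 u y)).im) =
        (fun y => ((fun z => u z * conj (pd 1 u z)) y).im) from rfl,
        pdR_im (hu.mul (hconj _ (contDiff_pd hu 1))) 0 x, hG0,
        pdR_mul (contDiff_pdR hΨ 0) hNs 0 x, hpN 0]
      simp [Complex.add_im]; rfl
    have hL1 : pdR 1 H1 x = -((d1 * conj d0).im + (a * conj m).im)
        - (pdR 1 (pdR 1 Ψ) x * N x + p1 * ((d1 * conj a + a * conj d1).re)) := by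
      rw [hH1]
      rw [pdR_sub him0.neg ((contDiff_pdR hΨ 1).mul hNs) 1 x]
      rw [show (fun y => -((u y * conj (pd 0 u y)).im)) =
        (fun y => -((fun z => (((fun w => u w * conj (pd 0 u w)) z).im)) y)) from rfl,
        pdR_neg 1 x, pdR_im (hu.mul (hconj _ (contDiff_pd hu 0))) 1 x, hG1,
        pdR_mul (contDiff_pdR hΨ 1) hNs 1 x, hpN 1]
      simp [Complex.add_im]; rfl
    have hNx : N x = ‖a‖^2 := by
      rw [hN]
      show (a * conj a).re = ‖a‖^2
      rw [Complex.mul_conj, Complex.ofReal_re, Complex.normSq_eq_norm_sq]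
    have := alg a d0 d1 m p0 p1 (pdR 0 (pdR 0 Ψ) x) (pdR 1 (pdR 1 Ψ) x)
    rw [hL0, hL1, hf3x, hf1, hf2]
    show (‖-Complex.I * d0 + ((-p1 : ℝ):ℂ) * a‖^2 + ‖-Complex.I * d1 + ((p0:ℝ):ℂ) * a‖^2)
      - (pdR 0 (pdR 0 Ψ) x + pdR 1 (pdR 1 Ψ) x) * ‖a‖^2 - _ = _
    rw [this, hNx]
    have hac : ((a * conj a).re) = ‖a‖^2 := by
      rw [Complex.mul_conj, Complex.ofReal_re, Complex.normSq_eq_norm_sq]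
    rw [hac]
  -- integral of divergence vanishes
  have hint0 : ∀ (H : EuclideanSpace ℝ (Fin 2) → ℝ) (i : Fin 2), ContDiff ℝ (⊤ : ℕ∞) H →
      HasCompactSupport H → ∫ x, pdR i H x = 0 := by
    intro H i hHs hHcs
    exact key_real H hHs hHcs (EuclideanSpace.single i 1)
  have hiH0 : Integrable (fun x => pdR 0 H0 x) := by
    apply Continuous.integrable_of_hasCompactSupport (contDiff_pdR hH0s 0).continuous
    exact hH0cs.fderiv_apply ℝ (EuclideanSpace.single 0 1)
  have hiH1 : Integrable (fun x => pdR 1 H1 x) := by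
    apply Continuous.integrable_of_hasCompactSupport (contDiff_pdR hH1s 1).continuous
    exact hH1cs.fderiv_apply ℝ (EuclideanSpace.single 1 1)
  have e1 : ∫ x, (f1 x - f2 x - f3 x) = 0 := by
    simp only [hdiv]
    rw [integral_add hiH0 hiH1, hint0 H0 0 hH0s hH0cs, hint0 H1 1 hH1s hH1cs, add_zero]
  have e2 : ∫ x, (f1 x - f2 x - f3 x) = (∫ x, f1 x) - (∫ x, f2 x) - (∫ x, f3 x) := by
    have hi12 : Integrable (fun x => f1 x - f2 x) := hi1.sub hi2
    rw [integral_sub hi12 hi3, integral_sub hi1 hi2]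
  linarith

end
end

section
/- Let Ω ⊂ ℝ² be open, Ψ : Ω → ℝ smooth and bounded on Ω, A := (−∂₂Ψ, ∂₁Ψ), B := ΔΨ. Then for every u ∈ C_c^∞(Ω;ℂ): ∫_Ω |(−i∇+A)u|² dx − ∫_Ω B|u|² dx ≥ e^{−2·Osc(Ω,Ψ)} · λ₁(Ω,0) · ∫_Ω |u|² dx, where λ₁(Ω,0) is the lowest Dirichlet eigenvalue of −Δ on Ω, i.e. λ₁(Ω,0) = inf{∫_Ω|∇w|²/∫_Ω|w|² : w ∈ C_c^∞(Ω), w ≠ 0}. -/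
open MeasureTheory

noncomputable section

/-- The lowest Dirichlet eigenvalue `λ₁(Ω,0)` of `-Δ` on `Ω`, defined as the infimum of the
Rayleigh quotient over nonzero test functions `w ∈ C_c^∞(Ω)`. -/
def lam1 (Ω : Set (EuclideanSpace ℝ (Fin 2))) : ℝ :=
  sInf {r : ℝ | ∃ w : EuclideanSpace ℝ (Fin 2) → ℝ, ContDiff ℝ (⊤ : ℕ∞) w ∧ HasCompactSupport w ∧
    tsupport w ⊆ Ω ∧ w ≠ 0 ∧
    r = (∫ x in Ω, ‖fderiv ℝ w x‖ ^ 2) / (∫ x in Ω, (w x) ^ 2)}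

section AuxLemmas

open Set

local notation "E2" => EuclideanSpace ℝ (Fin 2)

lemma my_pdR_contDiff {f : E2 → ℝ} (hf : ContDiff ℝ (⊤ : ℕ∞) f) (i : Fin 2) :
    ContDiff ℝ (⊤ : ℕ∞) (pdR i f) :=
  (hf.fderiv_right (by simp)).clm_apply contDiff_const

lemma my_fderiv_zero {F : Type*} [NormedAddCommGroup F] [NormedSpace ℝ F]
    {f : E2 → F} {x : E2} (hx : x ∉ tsupport f) : fderiv ℝ f x = 0 := by
  by_contra h
  exact hx (support_fderiv_subset ℝ (Function.mem_support.2 h))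

lemma my_pdR_zero {f : E2 → ℝ} {x : E2} (hx : x ∉ tsupport f) (i : Fin 2) :
    pdR i f x = 0 := by
  unfold pdR; rw [my_fderiv_zero hx]; rfl

lemma my_abs_coord_le_norm (x : E2) (i : Fin 2) : |x i| ≤ ‖x‖ := by
  rw [EuclideanSpace.norm_eq, Fin.sum_univ_two]
  rcases i with ⟨iv, hiv⟩
  interval_cases iv <;>
  · rw [← Real.sqrt_sq_eq_abs]; gcongr <;> simp [sq_nonneg]

lemma my_pdR_mul {f g : E2 → ℝ} {x : E2} (hf : DifferentiableAt ℝ f x)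
    (hg : DifferentiableAt ℝ g x) (i : Fin 2) :
    pdR i (fun y => f y * g y) x = f x * pdR i g x + g x * pdR i f x := by
  unfold pdR; rw [fderiv_fun_mul hf hg]; rfl

lemma my_pdR_add {f g : E2 → ℝ} {x : E2} (hf : DifferentiableAt ℝ f x)
    (hg : DifferentiableAt ℝ g x) (i : Fin 2) :
    pdR i (fun y => f y + g y) x = pdR i f x + pdR i g x := by
  unfold pdR; rw [fderiv_fun_add hf hg]; rfl

lemma my_pdR_sub {f g : E2 → ℝ} {x : E2} (hf : DifferentiableAt ℝ f x)
    (hg : DifferentiableAt ℝ g x) (i : Fin 2) :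
    pdR i (fun y => f y - g y) x = pdR i f x - pdR i g x := by
  unfold pdR; rw [fderiv_fun_sub hf hg]; rfl

lemma my_pdR_comm {f : E2 → ℝ} (hf : ContDiff ℝ (⊤ : ℕ∞) f) (i j : Fin 2) (x : E2) :
    pdR i (pdR j f) x = pdR j (pdR i f) x := by
  have hkey : ∀ (k l : Fin 2), pdR k (pdR l f) x
      = fderiv ℝ (fderiv ℝ f) x (EuclideanSpace.single k 1) (EuclideanSpace.single l 1) := by
    intro k l
    unfold pdR
    rw [fderiv_clm_apply (((hf.fderiv_right (m := (⊤ : ℕ∞)) (by simp)).differentiable (by simp) x))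
      (differentiableAt_const _)]
    simp
  rw [hkey i j, hkey j i]
  exact second_derivative_symmetric
    (fun y => ((hf.differentiable (by simp)) y).hasFDerivAt)
    (((hf.fderiv_right (m := (⊤ : ℕ∞)) (by simp)).differentiable (by simp) x).hasFDerivAt) _ _

/-- Divergence theorem for smooth compactly supported functions on `ℝ²`. -/
lemma my_integral_div_eq_zero {f g : E2 → ℝ} (hf : ContDiff ℝ (⊤ : ℕ∞) f) (hg : ContDiff ℝ (⊤ : ℕ∞) g)
    (hfs : HasCompactSupport f) (hgs : HasCompactSupport g) :
    ∫ x, (pdR 0 f x + pdR 1 g x) = 0 := by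
  obtain ⟨R, hR0, hR⟩ : ∃ R, 0 < R ∧ tsupport f ∪ tsupport g ⊆ Metric.closedBall 0 R := by
    obtain ⟨R, hR⟩ := (hfs.isBounded.union hgs.isBounded).subset_closedBall 0
    exact ⟨max R 1, by positivity, hR.trans (Metric.closedBall_subset_closedBall (le_max_left _ _))⟩
  set eqv := EuclideanSpace.equiv (Fin 2) ℝ with heqv
  set σ : (Fin 2 → ℝ) → E2 := ⇑eqv.symm with hσ
  have hnorm : ∀ (y : Fin 2 → ℝ) (i : Fin 2), |y i| ≤ ‖σ y‖ := fun y i =>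
    my_abs_coord_le_norm (σ y) i
  have key : (∫ x, (pdR 0 f x + pdR 1 g x))
      = ∫ y : Fin 2 → ℝ, (pdR 0 f (σ y) + pdR 1 g (σ y)) :=
    (((EuclideanSpace.volume_preserving_symm_measurableEquiv_toLp (Fin 2)).symm).integral_comp
      (MeasurableEquiv.toLp 2 (Fin 2 → ℝ)).measurableEmbedding
      (fun x => pdR 0 f x + pdR 1 g x)).symm
  rw [key]
  set a : Fin 2 → ℝ := fun _ => -(R+1) with ha
  set b : Fin 2 → ℝ := fun _ => (R+1) with hb
  have hab : a ≤ b := fun i => by simp only [ha, hb]; linarith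
  set F : Fin 2 → (Fin 2 → ℝ) → ℝ := ![fun y => f (σ y), fun y => g (σ y)] with hF
  set F' : Fin 2 → (Fin 2 → ℝ) → (Fin 2 → ℝ) →L[ℝ] ℝ :=
    ![fun y => (fderiv ℝ f (σ y)).comp (eqv.symm : (Fin 2 → ℝ) →L[ℝ] E2),
      fun y => (fderiv ℝ g (σ y)).comp (eqv.symm : (Fin 2 → ℝ) →L[ℝ] E2)] with hF'
  have hdiv : ∀ y : Fin 2 → ℝ, (∑ i, F' i y (Pi.single i 1)) = pdR 0 f (σ y) + pdR 1 g (σ y) := by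
    intro y
    rw [Fin.sum_univ_two]
    rfl
  have hout_zero : ∀ y : Fin 2 → ℝ, (∃ i, R < |y i|) →
      pdR 0 f (σ y) + pdR 1 g (σ y) = 0 := by
    rintro y ⟨i, hi⟩
    have h2 : (R : ℝ) < ‖σ y‖ := lt_of_lt_of_le hi (hnorm y i)
    have hout : σ y ∉ tsupport f ∪ tsupport g := fun hmem => by
      have := hR hmem
      simp only [Metric.mem_closedBall, dist_zero_right] at this
      linarith
    rw [my_pdR_zero (fun h => hout (Or.inl h)),
      my_pdR_zero (fun h => hout (Or.inr h)), add_zero]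
  have hcont : Continuous fun y : Fin 2 → ℝ => pdR 0 f (σ y) + pdR 1 g (σ y) :=
    (((my_pdR_contDiff hf 0).continuous).comp eqv.symm.continuous).add
      (((my_pdR_contDiff hg 1).continuous).comp eqv.symm.continuous)
  have main := integral_divergence_of_hasFDerivAt_off_countable' a b hab F F' ∅
    countable_empty
    (by
      rw [Fin.forall_fin_two]
      exact ⟨(hf.continuous.comp eqv.symm.continuous).continuousOn,
        (hg.continuous.comp eqv.symm.continuous).continuousOn⟩)
    (by
      intro x _
      rw [Fin.forall_fin_two]
      exact ⟨((hf.differentiable (by simp) (σ x)).hasFDerivAt).comp x eqv.symm.hasFDerivAt,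
        ((hg.differentiable (by simp) (σ x)).hasFDerivAt).comp x eqv.symm.hasFDerivAt⟩)
    (by
      apply ((hcont.continuousOn).congr ?_).integrableOn_compact isCompact_Icc
      intro y _; exact (hdiv y))
  have hstep : (∫ y : Fin 2 → ℝ, (pdR 0 f (σ y) + pdR 1 g (σ y)))
      = ∫ y in Icc a b, ∑ i, F' i y (Pi.single i 1) := by
    have h1 : (∫ y in Icc a b, ∑ i, F' i y (Pi.single i 1))
        = ∫ y : Fin 2 → ℝ, ∑ i, F' i y (Pi.single i 1) := by
      apply setIntegral_eq_integral_of_forall_compl_eq_zero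
      intro y hy
      rw [hdiv y]
      apply hout_zero
      have hy' : ¬ (a ≤ y ∧ y ≤ b) := by simpa [Set.mem_Icc] using hy
      rcases not_and_or.1 hy' with h | h
      · obtain ⟨i, hi⟩ := not_forall.1 (fun hh => h hh)
        push_neg at hi
        refine ⟨i, ?_⟩
        have hai : a i = -(R+1) := rfl
        rw [hai] at hi
        clear hy hy' h
        rw [abs_of_nonpos (by linarith)]
        linarith
      · obtain ⟨i, hi⟩ := not_forall.1 (fun hh => h hh)
        push_neg at hi
        refine ⟨i, ?_⟩
        have hbi : b i = R+1 := rfl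
        rw [hbi] at hi
        clear hy hy' h
        rw [abs_of_nonneg (by linarith)]
        linarith
    rw [h1]
    exact integral_congr_ae (Filter.Eventually.of_forall fun y => (hdiv y).symm)
  rw [hstep]
  refine main.trans ?_
  apply Finset.sum_eq_zero
  intro i _
  have hnm : ∀ (c : ℝ), R < |c| → ∀ z : Fin 1 → ℝ,
      σ (i.insertNth c z) ∉ tsupport f ∪ tsupport g := by
    intro c hc z hmem
    have h1 : |(i.insertNth c z : Fin 2 → ℝ) i| = |c| := by rw [Fin.insertNth_apply_same]
    have h2 : (R : ℝ) < ‖σ (i.insertNth c z)‖ := by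
      have := hnorm (i.insertNth c z) i
      rw [h1] at this
      linarith
    have := hR hmem
    simp only [Metric.mem_closedBall, dist_zero_right] at this
    linarith
  have hca : R < |a i| := by
    have h : a i = -(R+1) := rfl
    rw [h, abs_neg, abs_of_nonneg (by linarith)]
    linarith
  have hcb : R < |b i| := by
    have h : b i = R+1 := rfl
    rw [h, abs_of_nonneg (by linarith)]
    linarith
  have hFz : ∀ (c : ℝ), R < |c| → ∀ z : Fin 1 → ℝ, F i (i.insertNth c z) = 0 := by
    intro c hc z
    have hm := hnm c hc z
    rcases i with ⟨iv, hiv⟩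
    interval_cases iv
    · exact image_eq_zero_of_notMem_tsupport (f := f) (fun hh => hm (Or.inl hh))
    · exact image_eq_zero_of_notMem_tsupport (f := g) (fun hh => hm (Or.inr hh))
  simp only [hFz (b i) hcb, hFz (a i) hca, integral_zero, sub_zero]

/-- The cross-term identity: the integral of the divergence expression vanishes. -/
lemma my_cross {f g Ψ : E2 → ℝ} (hf : ContDiff ℝ (⊤ : ℕ∞) f) (hg : ContDiff ℝ (⊤ : ℕ∞) g)
    (hΨ : ContDiff ℝ (⊤ : ℕ∞) Ψ) (hfs : HasCompactSupport f) (hgs : HasCompactSupport g) :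
    ∫ x, (2*(pdR 1 f x * pdR 0 g x - pdR 1 g x * pdR 0 f x
        - pdR 0 Ψ x * (f x * pdR 0 f x + g x * pdR 0 g x)
        - pdR 1 Ψ x * (f x * pdR 1 f x + g x * pdR 1 g x))
      - (pdR 0 (pdR 0 Ψ) x + pdR 1 (pdR 1 Ψ) x) * (f x * f x + g x * g x)) = 0 := by
  have dF : Differentiable ℝ f := hf.differentiable (by simp)
  have dG : Differentiable ℝ g := hg.differentiable (by simp)
  have dPf : ∀ i, Differentiable ℝ (pdR i f) := fun i => (my_pdR_contDiff hf i).differentiable (by simp)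
  have dPg : ∀ i, Differentiable ℝ (pdR i g) := fun i => (my_pdR_contDiff hg i).differentiable (by simp)
  have dPΨ : ∀ i, Differentiable ℝ (pdR i Ψ) := fun i => (my_pdR_contDiff hΨ i).differentiable (by simp)
  set S : E2 → ℝ := fun y => f y * f y + g y * g y with hS
  have dS : Differentiable ℝ S := (dF.mul dF).add (dG.mul dG)
  set F₁ : E2 → ℝ := fun y => pdR 1 f y * g y - pdR 1 g y * f y - pdR 0 Ψ y * S y with hF₁
  set F₂ : E2 → ℝ := fun y => pdR 0 g y * f y - pdR 0 f y * g y - pdR 1 Ψ y * S y with hF₂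
  have hF₁c : ContDiff ℝ (⊤ : ℕ∞) F₁ :=
    (((my_pdR_contDiff hf 1).mul hg).sub ((my_pdR_contDiff hg 1).mul hf)).sub
      ((my_pdR_contDiff hΨ 0).mul ((hf.mul hf).add (hg.mul hg)))
  have hF₂c : ContDiff ℝ (⊤ : ℕ∞) F₂ :=
    (((my_pdR_contDiff hg 0).mul hf).sub ((my_pdR_contDiff hf 0).mul hg)).sub
      ((my_pdR_contDiff hΨ 1).mul ((hf.mul hf).add (hg.mul hg)))
  have hK : IsCompact (tsupport f ∪ tsupport g) := hfs.union hgs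
  have hsup : ∀ (G : E2 → ℝ), (∀ x, x ∉ tsupport f → x ∉ tsupport g → G x = 0) →
      HasCompactSupport G := by
    intro G hG
    apply HasCompactSupport.of_support_subset_isCompact hK
    intro x hx
    by_contra hmem
    simp only [mem_union] at hmem
    exact hx (hG x (fun h => hmem (Or.inl h)) (fun h => hmem (Or.inr h)))
  have hF₁s : HasCompactSupport F₁ := by
    apply hsup
    intro x h1 h2
    simp only [hF₁, hS, image_eq_zero_of_notMem_tsupport h1, image_eq_zero_of_notMem_tsupport h2,
      my_pdR_zero h1, my_pdR_zero h2]
    ring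
  have hF₂s : HasCompactSupport F₂ := by
    apply hsup
    intro x h1 h2
    simp only [hF₂, hS, image_eq_zero_of_notMem_tsupport h1, image_eq_zero_of_notMem_tsupport h2,
      my_pdR_zero h1, my_pdR_zero h2]
    ring
  have key := my_integral_div_eq_zero hF₁c hF₂c hF₁s hF₂s
  rw [← key]
  apply integral_congr_ae
  apply Filter.Eventually.of_forall
  intro x
  have dSx : pdR 0 S x
      = f x * pdR 0 f x + f x * pdR 0 f x + (g x * pdR 0 g x + g x * pdR 0 g x) := by
    rw [hS]
    rw [my_pdR_add ((dF x).fun_mul (dF x)) ((dG x).fun_mul (dG x)), my_pdR_mul (dF x) (dF x),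
      my_pdR_mul (dG x) (dG x)]
  have dSx1 : pdR 1 S x
      = f x * pdR 1 f x + f x * pdR 1 f x + (g x * pdR 1 g x + g x * pdR 1 g x) := by
    rw [hS]
    rw [my_pdR_add ((dF x).fun_mul (dF x)) ((dG x).fun_mul (dG x)), my_pdR_mul (dF x) (dF x),
      my_pdR_mul (dG x) (dG x)]
  have e₁ : pdR 0 F₁ x = (pdR 1 f x * pdR 0 g x + g x * pdR 0 (pdR 1 f) x)
      - (pdR 1 g x * pdR 0 f x + f x * pdR 0 (pdR 1 g) x)
      - (pdR 0 Ψ x * pdR 0 S x + S x * pdR 0 (pdR 0 Ψ) x) := by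
    rw [hF₁]
    rw [my_pdR_sub (((dPf 1 x).fun_mul (dG x)).fun_sub ((dPg 1 x).fun_mul (dF x))) ((dPΨ 0 x).fun_mul (dS x)),
      my_pdR_sub ((dPf 1 x).fun_mul (dG x)) ((dPg 1 x).fun_mul (dF x)),
      my_pdR_mul (dPf 1 x) (dG x), my_pdR_mul (dPg 1 x) (dF x), my_pdR_mul (dPΨ 0 x) (dS x)]
  have e₂ : pdR 1 F₂ x = (pdR 0 g x * pdR 1 f x + f x * pdR 1 (pdR 0 g) x)
      - (pdR 0 f x * pdR 1 g x + g x * pdR 1 (pdR 0 f) x)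
      - (pdR 1 Ψ x * pdR 1 S x + S x * pdR 1 (pdR 1 Ψ) x) := by
    rw [hF₂]
    rw [my_pdR_sub (((dPg 0 x).fun_mul (dF x)).fun_sub ((dPf 0 x).fun_mul (dG x))) ((dPΨ 1 x).fun_mul (dS x)),
      my_pdR_sub ((dPg 0 x).fun_mul (dF x)) ((dPf 0 x).fun_mul (dG x)),
      my_pdR_mul (dPg 0 x) (dF x), my_pdR_mul (dPf 0 x) (dG x), my_pdR_mul (dPΨ 1 x) (dS x)]
  beta_reduce
  rw [e₁, e₂, dSx, dSx1, my_pdR_comm hf 0 1, my_pdR_comm hg 0 1]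
  have : S x = f x * f x + g x * g x := rfl
  rw [this]
  ring

lemma my_pdR_zero_fn (i : Fin 2) : pdR i (fun _ : E2 => (0:ℝ)) = fun _ => 0 := by
  funext x
  unfold pdR
  rw [fderiv_fun_const]
  rfl

/-- Cross lemma with zero potential. -/
lemma my_cross0 {r s : E2 → ℝ} (hr : ContDiff ℝ (⊤ : ℕ∞) r) (hs : ContDiff ℝ (⊤ : ℕ∞) s)
    (hrs : HasCompactSupport r) (hss : HasCompactSupport s) :
    ∫ x, (pdR 1 r x * pdR 0 s x - pdR 1 s x * pdR 0 r x) = 0 := by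
  have h := my_cross (Ψ := fun _ => 0) hr hs contDiff_const hrs hss
  have hsimp : ∀ x : E2, (2*(pdR 1 r x * pdR 0 s x - pdR 1 s x * pdR 0 r x
        - pdR 0 (fun _ => (0:ℝ)) x * (r x * pdR 0 r x + s x * pdR 0 s x)
        - pdR 1 (fun _ => (0:ℝ)) x * (r x * pdR 1 r x + s x * pdR 1 s x))
      - (pdR 0 (pdR 0 (fun _ => (0:ℝ))) x + pdR 1 (pdR 1 (fun _ => (0:ℝ))) x)
        * (r x * r x + s x * s x))
      = 2 * (pdR 1 r x * pdR 0 s x - pdR 1 s x * pdR 0 r x) := by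
    intro x
    rw [my_pdR_zero_fn 0, my_pdR_zero_fn 1, my_pdR_zero_fn 0, my_pdR_zero_fn 1]
    simp
  rw [integral_congr_ae (Filter.Eventually.of_forall hsimp)] at h
  rw [integral_const_mul] at h
  linarith

lemma my_norm_clm_sq (h : E2 →L[ℝ] ℝ) :
    ‖h‖^2 = (h (EuclideanSpace.single 0 1))^2 + (h (EuclideanSpace.single 1 1))^2 := by
  set v := (InnerProductSpace.toDual ℝ (EuclideanSpace ℝ (Fin 2))).symm h with hv
  have hnv : ‖h‖ = ‖v‖ := by
    rw [hv]
    exact (LinearIsometryEquiv.norm_map _ _).symm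
  have happ : ∀ i : Fin 2, h (EuclideanSpace.single i 1) = v i := by
    intro i
    have := InnerProductSpace.toDual_symm_apply (𝕜 := ℝ)
      (E := EuclideanSpace ℝ (Fin 2)) (x := EuclideanSpace.single i 1) (y := h)
    rw [← this, ← hv, EuclideanSpace.inner_single_right]
    simp
  rw [hnv, happ 0, happ 1, EuclideanSpace.norm_eq, Fin.sum_univ_two,
    Real.sq_sqrt (by positivity)]
  simp [Real.norm_eq_abs, sq_abs]

lemma my_pd_re {u : E2 → ℂ} (hu : Differentiable ℝ u) (i : Fin 2) (x : E2) :
    pdR i (fun y => (u y).re) x = (pd i u x).re := by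
  unfold pd pdR
  have : fderiv ℝ (fun y => (u y).re) x = Complex.reCLM.comp (fderiv ℝ u x) :=
    (Complex.reCLM.hasFDerivAt.comp x (hu x).hasFDerivAt).fderiv
  rw [this]
  rfl

lemma my_pd_im {u : E2 → ℂ} (hu : Differentiable ℝ u) (i : Fin 2) (x : E2) :
    pdR i (fun y => (u y).im) x = (pd i u x).im := by
  unfold pd pdR
  have : fderiv ℝ (fun y => (u y).im) x = Complex.imCLM.comp (fderiv ℝ u x) :=
    (Complex.imCLM.hasFDerivAt.comp x (hu x).hasFDerivAt).fderiv
  rw [this]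
  rfl

lemma my_norm_expr (A U : ℂ) (c : ℝ) :
    ‖-Complex.I * A + (c:ℂ) * U‖^2 = (A.im + c*U.re)^2 + (c*U.im - A.re)^2 := by
  rw [Complex.sq_norm, Complex.normSq_apply]
  simp only [Complex.add_re, Complex.add_im, Complex.mul_re, Complex.mul_im,
    Complex.neg_re, Complex.neg_im, Complex.I_re, Complex.I_im,
    Complex.ofReal_re, Complex.ofReal_im]
  ring

lemma my_norm_sq_c (U : ℂ) : ‖U‖^2 = U.re^2 + U.im^2 := by
  rw [Complex.sq_norm, Complex.normSq_apply]
  ring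

lemma my_pdR_exp {Ψ : E2 → ℝ} (hΨ : ContDiff ℝ (⊤ : ℕ∞) Ψ) (i : Fin 2) (x : E2) :
    pdR i (fun y => Real.exp (Ψ y)) x = pdR i Ψ x * Real.exp (Ψ x) := by
  unfold pdR
  have h1 : HasFDerivAt (fun y => Real.exp (Ψ y)) (Real.exp (Ψ x) • (fderiv ℝ Ψ x)) x :=
    ((hΨ.differentiable (by simp) x).hasFDerivAt).exp
  rw [h1.fderiv]
  simp only [ContinuousLinearMap.smul_apply, smul_eq_mul]
  ring

lemma my_lam1_nonneg (Ω : Set (EuclideanSpace ℝ (Fin 2))) : 0 ≤ lam1 Ω := by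
  apply Real.sInf_nonneg
  rintro r ⟨w, _, _, _, _, rfl⟩
  apply div_nonneg
  · exact integral_nonneg fun x => by positivity
  · exact integral_nonneg fun x => by positivity

lemma my_lam1_le {Ω : Set (EuclideanSpace ℝ (Fin 2))} {w : EuclideanSpace ℝ (Fin 2) → ℝ}
    (hw : ContDiff ℝ (⊤ : ℕ∞) w) (hws : HasCompactSupport w) (hwsupp : tsupport w ⊆ Ω) :
    lam1 Ω * ∫ x in Ω, (w x)^2 ≤ ∫ x in Ω, ‖fderiv ℝ w x‖^2 := by
  rcases eq_or_ne w 0 with h | hne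
  · subst h
    have h2 : ∀ x : E2, ‖fderiv ℝ (0 : E2 → ℝ) x‖^2 = 0 := by
      intro x
      rw [show (0 : E2 → ℝ) = fun _ => (0:ℝ) from rfl, fderiv_fun_const]
      simp
    rw [integral_congr_ae (Filter.Eventually.of_forall (fun x => h2 x))]
    simp
  · have hD : 0 < ∫ x in Ω, (w x)^2 := by
      have hset : (∫ x in Ω, (w x)^2) = ∫ x, (w x)^2 :=
        setIntegral_eq_integral_of_forall_compl_eq_zero (fun x hx => by
          have : w x = 0 := image_eq_zero_of_notMem_tsupport (fun hm => hx (hwsupp hm))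
          simp [this])
      rw [hset]
      have hcs2 : HasCompactSupport (fun x => (w x)^2) := by
        apply HasCompactSupport.of_support_subset_isCompact hws
        intro x hx
        have : w x ≠ 0 := fun h0 => hx (by simp [h0])
        exact subset_closure (Function.mem_support.2 this)
      have hint : Integrable (fun x => (w x)^2) :=
        (hw.continuous.pow 2).integrable_of_hasCompactSupport hcs2
      rw [integral_pos_iff_support_of_nonneg (fun x => sq_nonneg _) hint]
      have hsupp_eq : Function.support (fun x => (w x)^2) = Function.support w := by
        ext x; simp [pow_eq_zero_iff]
      rw [hsupp_eq]
      apply IsOpen.measure_pos volume (hw.continuous.isOpen_support)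
      exact Function.support_nonempty_iff.2 hne
    have hbdd : BddBelow {r : ℝ | ∃ w : EuclideanSpace ℝ (Fin 2) → ℝ, ContDiff ℝ (⊤ : ℕ∞) w ∧
        HasCompactSupport w ∧ tsupport w ⊆ Ω ∧ w ≠ 0 ∧
        r = (∫ x in Ω, ‖fderiv ℝ w x‖ ^ 2) / (∫ x in Ω, (w x) ^ 2)} := by
      refine ⟨0, ?_⟩
      rintro r ⟨w', _, _, _, _, rfl⟩
      apply div_nonneg
      · exact integral_nonneg fun x => by positivity
      · exact integral_nonneg fun x => by positivity
    have hmem : (∫ x in Ω, ‖fderiv ℝ w x‖ ^ 2) / (∫ x in Ω, (w x) ^ 2) ∈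
        {r : ℝ | ∃ w : EuclideanSpace ℝ (Fin 2) → ℝ, ContDiff ℝ (⊤ : ℕ∞) w ∧
        HasCompactSupport w ∧ tsupport w ⊆ Ω ∧ w ≠ 0 ∧
        r = (∫ x in Ω, ‖fderiv ℝ w x‖ ^ 2) / (∫ x in Ω, (w x) ^ 2)} :=
      ⟨w, hw, hws, hwsupp, hne, rfl⟩
    have hle : lam1 Ω ≤ (∫ x in Ω, ‖fderiv ℝ w x‖ ^ 2) / (∫ x in Ω, (w x) ^ 2) :=
      csInf_le hbdd hmem
    calc lam1 Ω * ∫ x in Ω, (w x)^2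
        ≤ ((∫ x in Ω, ‖fderiv ℝ w x‖ ^ 2) / (∫ x in Ω, (w x) ^ 2)) * ∫ x in Ω, (w x)^2 :=
          mul_le_mul_of_nonneg_right hle hD.le
      _ = ∫ x in Ω, ‖fderiv ℝ w x‖ ^ 2 := div_mul_cancel₀ _ hD.ne'

lemma my_key_alg (P Ex f0 f1 g0 g1 p q fx gx : ℝ) (hEP : Ex*P*P = 1) :
    (g0 - f1 - q*fx + p*gx)^2 + (f0 + g1 + q*gx + p*fx)^2
    = Ex * (((P*f0 + fx*(p*P)) + (P*g1 + gx*(q*P)))^2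
      + ((P*g0 + gx*(p*P)) - (P*f1 + fx*(q*P)))^2) := by
  linear_combination (-((f0 + p*fx + g1 + q*gx)^2 + (g0 + p*gx - f1 - q*fx)^2)) * hEP

end AuxLemmas

theorem stmt_12 (Ω : Set (EuclideanSpace ℝ (Fin 2))) (hΩ : IsOpen Ω)
    (hbdd : Bornology.IsBounded Ω)
    (Ψ : EuclideanSpace ℝ (Fin 2) → ℝ) (hΨ : ContDiff ℝ (⊤ : ℕ∞) Ψ)
    (hAbove : BddAbove (Ψ '' Ω)) (hBelow : BddBelow (Ψ '' Ω))
    (u : EuclideanSpace ℝ (Fin 2) → ℂ) (hu : ContDiff ℝ (⊤ : ℕ∞) u)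
    (hcs : HasCompactSupport u) (hsupp : tsupport u ⊆ Ω) :
    (∫ x in Ω,
        (‖-Complex.I * pd 0 u x + ((-(pdR 1 Ψ x) : ℝ) : ℂ) * u x‖ ^ 2 +
          ‖-Complex.I * pd 1 u x + ((pdR 0 Ψ x : ℝ) : ℂ) * u x‖ ^ 2)) -
      (∫ x in Ω, (pdR 0 (pdR 0 Ψ) x + pdR 1 (pdR 1 Ψ) x) * ‖u x‖ ^ 2) ≥
    Real.exp (-2 * (sSup (Ψ '' Ω) - sInf (Ψ '' Ω))) * lam1 Ω * ∫ x in Ω, ‖u x‖ ^ 2 := by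
  classical
  set m := sInf (Ψ '' Ω) with hm
  set M := sSup (Ψ '' Ω) with hM
  set f : EuclideanSpace ℝ (Fin 2) → ℝ := fun x => (u x).re with hfdef
  set g : EuclideanSpace ℝ (Fin 2) → ℝ := fun x => (u x).im with hgdef
  have hud : Differentiable ℝ u := hu.differentiable (by simp)
  have hfc : ContDiff ℝ (⊤ : ℕ∞) f := Complex.reCLM.contDiff.comp hu
  have hgc : ContDiff ℝ (⊤ : ℕ∞) g := Complex.imCLM.contDiff.comp hu
  have hsuppf : Function.support f ⊆ Function.support u := fun x hx hux => hx (by simp [hfdef, hux])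
  have hsuppg : Function.support g ⊆ Function.support u := fun x hx hux => hx (by simp [hgdef, hux])
  have hfs : HasCompactSupport f := hcs.mono hsuppf
  have hgs : HasCompactSupport g := hcs.mono hsuppg
  have htf : tsupport f ⊆ tsupport u := closure_mono hsuppf
  have htg : tsupport g ⊆ tsupport u := closure_mono hsuppg
  set φ : EuclideanSpace ℝ (Fin 2) → ℝ := fun x => Real.exp (Ψ x) with hφdef
  have hφc : ContDiff ℝ (⊤ : ℕ∞) φ := Real.contDiff_exp.comp hΨ
  set r : EuclideanSpace ℝ (Fin 2) → ℝ := fun x => φ x * f x with hrdef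
  set s : EuclideanSpace ℝ (Fin 2) → ℝ := fun x => φ x * g x with hsdef
  have hrc : ContDiff ℝ (⊤ : ℕ∞) r := hφc.mul hfc
  have hsc : ContDiff ℝ (⊤ : ℕ∞) s := hφc.mul hgc
  have hsuppr : Function.support r ⊆ Function.support u :=
    fun x hx => hsuppf (fun h0 => hx (by simp [hrdef, h0]))
  have hsupps : Function.support s ⊆ Function.support u :=
    fun x hx => hsuppg (fun h0 => hx (by simp [hsdef, h0]))
  have hrs : HasCompactSupport r := hcs.mono hsuppr
  have hss : HasCompactSupport s := hcs.mono hsupps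
  have htr : tsupport r ⊆ tsupport u := closure_mono hsuppr
  have hts : tsupport s ⊆ tsupport u := closure_mono hsupps
  -- differentiability and continuity facts
  have hfd : Differentiable ℝ f := hfc.differentiable (by simp)
  have hgd : Differentiable ℝ g := hgc.differentiable (by simp)
  have hφd : Differentiable ℝ φ := hφc.differentiable (by simp)
  have cf : Continuous f := hfc.continuous
  have cg : Continuous g := hgc.continuous
  have cφ : Continuous φ := hφc.continuous
  have cr : Continuous r := hrc.continuous
  have cs' : Continuous s := hsc.continuous
  have cpf : ∀ i, Continuous (pdR i f) := fun i => (my_pdR_contDiff hfc i).continuous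
  have cpg : ∀ i, Continuous (pdR i g) := fun i => (my_pdR_contDiff hgc i).continuous
  have cpr : ∀ i, Continuous (pdR i r) := fun i => (my_pdR_contDiff hrc i).continuous
  have cps : ∀ i, Continuous (pdR i s) := fun i => (my_pdR_contDiff hsc i).continuous
  have cpΨ : ∀ i, Continuous (pdR i Ψ) := fun i => (my_pdR_contDiff hΨ i).continuous
  have cppΨ : ∀ i j, Continuous (pdR i (pdR j Ψ)) :=
    fun i j => (my_pdR_contDiff (my_pdR_contDiff hΨ j) i).continuous
  -- vanishing facts
  have zu : ∀ x, x ∉ tsupport u → u x = 0 := fun x hx => image_eq_zero_of_notMem_tsupport hx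
  have zf : ∀ x, x ∉ tsupport u → f x = 0 := fun x hx => by simp [hfdef, zu x hx]
  have zg : ∀ x, x ∉ tsupport u → g x = 0 := fun x hx => by simp [hgdef, zu x hx]
  have zr : ∀ x, x ∉ tsupport u → r x = 0 := fun x hx => by simp [hrdef, zf x hx]
  have zs : ∀ x, x ∉ tsupport u → s x = 0 := fun x hx => by simp [hsdef, zg x hx]
  have zpf : ∀ (i : Fin 2) x, x ∉ tsupport u → pdR i f x = 0 :=
    fun i x hx => my_pdR_zero (fun hmm => hx (htf hmm)) i
  have zpg : ∀ (i : Fin 2) x, x ∉ tsupport u → pdR i g x = 0 :=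
    fun i x hx => my_pdR_zero (fun hmm => hx (htg hmm)) i
  have zpr : ∀ (i : Fin 2) x, x ∉ tsupport u → pdR i r x = 0 :=
    fun i x hx => my_pdR_zero (fun hmm => hx (htr hmm)) i
  have zps : ∀ (i : Fin 2) x, x ∉ tsupport u → pdR i s x = 0 :=
    fun i x hx => my_pdR_zero (fun hmm => hx (hts hmm)) i
  -- integrability and set-integral helpers
  have mk_int : ∀ {h : EuclideanSpace ℝ (Fin 2) → ℝ}, Continuous h →
      (∀ x, x ∉ tsupport u → h x = 0) → Integrable h volume := by
    intro h hc h0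
    apply hc.integrable_of_hasCompactSupport
    apply HasCompactSupport.of_support_subset_isCompact hcs
    intro x hx
    by_contra hmm
    exact hx (h0 x hmm)
  have mk_set : ∀ {h : EuclideanSpace ℝ (Fin 2) → ℝ}, (∀ x, x ∉ tsupport u → h x = 0) →
      (∫ x in Ω, h x) = ∫ x, h x :=
    fun {h} h0 => setIntegral_eq_integral_of_forall_compl_eq_zero
      (fun x hx => h0 x (fun hmm => hx (hsupp hmm)))
  -- main functionals
  set L : EuclideanSpace ℝ (Fin 2) → ℝ := fun x =>
    ((pdR 0 g x) + (-(pdR 1 Ψ x)) * f x)^2 + ((-(pdR 1 Ψ x)) * g x - pdR 0 f x)^2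
      + (((pdR 1 g x) + (pdR 0 Ψ x) * f x)^2 + ((pdR 0 Ψ x) * g x - pdR 1 f x)^2) with hLdef
  set Bi : EuclideanSpace ℝ (Fin 2) → ℝ := fun x =>
    (pdR 0 (pdR 0 Ψ) x + pdR 1 (pdR 1 Ψ) x) * (f x * f x + g x * g x) with hBidef
  set W : EuclideanSpace ℝ (Fin 2) → ℝ := fun x =>
    (pdR 0 g x - pdR 1 f x - pdR 1 Ψ x * f x + pdR 0 Ψ x * g x)^2
      + (pdR 0 f x + pdR 1 g x + pdR 1 Ψ x * g x + pdR 0 Ψ x * f x)^2 with hWdef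
  set V : EuclideanSpace ℝ (Fin 2) → ℝ := fun x =>
    (pdR 0 r x + pdR 1 s x)^2 + (pdR 0 s x - pdR 1 r x)^2 with hVdef
  set D : EuclideanSpace ℝ (Fin 2) → ℝ := fun x =>
    2*(pdR 1 f x * pdR 0 g x - pdR 1 g x * pdR 0 f x
        - pdR 0 Ψ x * (f x * pdR 0 f x + g x * pdR 0 g x)
        - pdR 1 Ψ x * (f x * pdR 1 f x + g x * pdR 1 g x)) with hDdef
  set Su : EuclideanSpace ℝ (Fin 2) → ℝ := fun x =>
    pdR 0 r x^2 + pdR 1 r x^2 + (pdR 0 s x^2 + pdR 1 s x^2) with hSudef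
  -- continuity of the functionals
  have cL : Continuous L := by
    apply Continuous.add
    apply Continuous.add
    · exact ((cpg 0).add ((cpΨ 1).neg.mul cf)).pow 2
    · exact (((cpΨ 1).neg.mul cg).sub (cpf 0)).pow 2
    · exact (((cpg 1).add ((cpΨ 0).mul cf)).pow 2).add ((((cpΨ 0).mul cg).sub (cpf 1)).pow 2)
  have cBi : Continuous Bi :=
    ((cppΨ 0 0).add (cppΨ 1 1)).mul ((cf.mul cf).add (cg.mul cg))
  have cW : Continuous W :=
    ((((cpg 0).sub (cpf 1)).sub ((cpΨ 1).mul cf)).add ((cpΨ 0).mul cg)).pow 2 |>.add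
      (((((cpf 0).add (cpg 1)).add ((cpΨ 1).mul cg)).add ((cpΨ 0).mul cf)).pow 2)
  have cV : Continuous V :=
    (((cpr 0).add (cps 1)).pow 2).add (((cps 0).sub (cpr 1)).pow 2)
  have cD : Continuous D := by
    apply Continuous.mul continuous_const
    exact ((((cpf 1).mul (cpg 0)).sub ((cpg 1).mul (cpf 0))).sub
      ((cpΨ 0).mul ((cf.mul (cpf 0)).add (cg.mul (cpg 0))))).sub
      ((cpΨ 1).mul ((cf.mul (cpf 1)).add (cg.mul (cpg 1))))
  have cSu : Continuous Su :=
    (((cpr 0).pow 2).add ((cpr 1).pow 2)).add (((cps 0).pow 2).add ((cps 1).pow 2))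
  -- vanishing of the functionals
  have zL : ∀ x, x ∉ tsupport u → L x = 0 := by
    intro x hx
    simp only [hLdef, zf x hx, zg x hx, zpf 0 x hx, zpf 1 x hx, zpg 0 x hx, zpg 1 x hx]
    ring
  have zBi : ∀ x, x ∉ tsupport u → Bi x = 0 := by
    intro x hx
    simp only [hBidef, zf x hx, zg x hx]
    ring
  have zW : ∀ x, x ∉ tsupport u → W x = 0 := by
    intro x hx
    simp only [hWdef, zf x hx, zg x hx, zpf 0 x hx, zpf 1 x hx, zpg 0 x hx, zpg 1 x hx]
    ring
  have zV : ∀ x, x ∉ tsupport u → V x = 0 := by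
    intro x hx
    simp only [hVdef, zpr 0 x hx, zpr 1 x hx, zps 0 x hx, zps 1 x hx]
    ring
  have zD : ∀ x, x ∉ tsupport u → D x = 0 := by
    intro x hx
    simp only [hDdef, zf x hx, zg x hx, zpf 0 x hx, zpf 1 x hx, zpg 0 x hx, zpg 1 x hx]
    ring
  have zSu : ∀ x, x ∉ tsupport u → Su x = 0 := by
    intro x hx
    simp only [hSudef, zpr 0 x hx, zpr 1 x hx, zps 0 x hx, zps 1 x hx]
    ring
  have intL : Integrable L := mk_int cL zL
  have intBi : Integrable Bi := mk_int cBi zBi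
  have intW : Integrable W := mk_int cW zW
  have intV : Integrable V := mk_int cV zV
  have intD : Integrable D := mk_int cD zD
  have intSu : Integrable Su := mk_int cSu zSu
  -- Step A : ∫ W = ∫ L + ∫ Bi
  have hcrossint := my_cross hfc hgc hΨ hfs hgs
  have hDB : (∫ x, (D x - Bi x)) = 0 := by
    rw [← hcrossint]
  have hDeqB : (∫ x, D x) = ∫ x, Bi x := by
    rw [integral_sub intD intBi] at hDB
    linarith
  have hWLD : ∀ x, W x = L x - D x := by
    intro x
    simp only [hWdef, hLdef, hDdef]
    ring
  have stepAfull : (∫ x, W x) = (∫ x, L x) - ∫ x, Bi x := by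
    calc (∫ x, W x) = ∫ x, (L x - D x) :=
          integral_congr_ae (Filter.Eventually.of_forall hWLD)
      _ = (∫ x, L x) - ∫ x, D x := integral_sub intL intD
      _ = (∫ x, L x) - ∫ x, Bi x := by rw [hDeqB]
  have stepA : (∫ x in Ω, L x) - (∫ x in Ω, Bi x) = ∫ x in Ω, W x := by
    rw [mk_set zL, mk_set zBi, mk_set zW]
    linarith
  -- Step B : pointwise W = exp(2Ψ) V
  have hpdr : ∀ (i : Fin 2) x, pdR i r x
      = Real.exp (Ψ x) * pdR i f x + f x * (pdR i Ψ x * Real.exp (Ψ x)) := by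
    intro i x
    rw [hrdef, my_pdR_mul (hφd x) (hfd x), hφdef, my_pdR_exp hΨ i x]
  have hpds : ∀ (i : Fin 2) x, pdR i s x
      = Real.exp (Ψ x) * pdR i g x + g x * (pdR i Ψ x * Real.exp (Ψ x)) := by
    intro i x
    rw [hsdef, my_pdR_mul (hφd x) (hgd x), hφdef, my_pdR_exp hΨ i x]
  have hWV : ∀ x, W x = Real.exp (-(2*Ψ x)) * V x := by
    intro x
    have hEP : Real.exp (-(2*Ψ x)) * Real.exp (Ψ x) * Real.exp (Ψ x) = 1 := by
      rw [← Real.exp_add, ← Real.exp_add, show -(2*Ψ x) + Ψ x + Ψ x = 0 by ring, Real.exp_zero]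
    have hkey := my_key_alg (Real.exp (Ψ x)) (Real.exp (-(2*Ψ x))) (pdR 0 f x) (pdR 1 f x)
      (pdR 0 g x) (pdR 1 g x) (pdR 0 Ψ x) (pdR 1 Ψ x) (f x) (g x) hEP
    simp only [hWdef, hVdef]
    rw [hpdr 0 x, hpdr 1 x, hpds 0 x, hpds 1 x]
    linear_combination hkey
  -- Step C : exp(2m) ∫ V ≤ ∫ W
  have hVnonneg : ∀ x, 0 ≤ V x := fun x => by simp only [hVdef]; positivity
  have stepC : Real.exp (-(2*M)) * (∫ x in Ω, V x) ≤ ∫ x in Ω, W x := by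
    rw [← integral_const_mul]
    apply setIntegral_mono_on (intV.integrableOn.const_mul _) intW.integrableOn hΩ.measurableSet
    intro x hx
    rw [hWV x]
    apply mul_le_mul_of_nonneg_right _ (hVnonneg x)
    apply Real.exp_le_exp.2
    have hMx : Ψ x ≤ M := le_csSup hAbove ⟨x, hx, rfl⟩
    linarith
  -- Step D : ∫ V = ∫ Su
  have hcross0 := my_cross0 hrc hsc hrs hss
  have crossrs : Continuous fun x => 2*(pdR 1 r x * pdR 0 s x - pdR 1 s x * pdR 0 r x) :=
    continuous_const.mul (((cpr 1).mul (cps 0)).sub ((cps 1).mul (cpr 0)))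
  have zcrossrs : ∀ x, x ∉ tsupport u →
      2*(pdR 1 r x * pdR 0 s x - pdR 1 s x * pdR 0 r x) = 0 := by
    intro x hx
    rw [zpr 1 x hx, zps 0 x hx, zps 1 x hx, zpr 0 x hx]
    ring
  have intcrs : Integrable (fun x => 2*(pdR 1 r x * pdR 0 s x - pdR 1 s x * pdR 0 r x)) :=
    mk_int crossrs zcrossrs
  have stepDfull : (∫ x, V x) = ∫ x, Su x := by
    have h1 : ∀ x, V x = Su x - 2*(pdR 1 r x * pdR 0 s x - pdR 1 s x * pdR 0 r x) := by
      intro x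
      simp only [hVdef, hSudef]
      ring
    calc (∫ x, V x) = ∫ x, (Su x - 2*(pdR 1 r x * pdR 0 s x - pdR 1 s x * pdR 0 r x)) :=
          integral_congr_ae (Filter.Eventually.of_forall h1)
      _ = (∫ x, Su x) - ∫ x, 2*(pdR 1 r x * pdR 0 s x - pdR 1 s x * pdR 0 r x) :=
          integral_sub intSu intcrs
      _ = ∫ x, Su x := by rw [integral_const_mul, hcross0]; ring
  have stepD : (∫ x in Ω, V x) = ∫ x in Ω, Su x := by
    rw [mk_set zV, mk_set zSu, stepDfull]
  -- Step E : ∫ Su = ∫ ‖∇r‖² + ∫ ‖∇s‖²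
  have hnr : ∀ x, ‖fderiv ℝ r x‖^2 = pdR 0 r x^2 + pdR 1 r x^2 :=
    fun x => my_norm_clm_sq (fderiv ℝ r x)
  have hns : ∀ x, ‖fderiv ℝ s x‖^2 = pdR 0 s x^2 + pdR 1 s x^2 :=
    fun x => my_norm_clm_sq (fderiv ℝ s x)
  have cfr : Continuous fun x => ‖fderiv ℝ r x‖^2 :=
    (((hrc.fderiv_right (m := (⊤ : ℕ∞)) (by simp)).continuous).norm).pow 2
  have cfs : Continuous fun x => ‖fderiv ℝ s x‖^2 :=
    (((hsc.fderiv_right (m := (⊤ : ℕ∞)) (by simp)).continuous).norm).pow 2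
  have zfr : ∀ x, x ∉ tsupport u → ‖fderiv ℝ r x‖^2 = 0 := by
    intro x hx
    rw [my_fderiv_zero (fun hmm => hx (htr hmm))]
    simp
  have zfs : ∀ x, x ∉ tsupport u → ‖fderiv ℝ s x‖^2 = 0 := by
    intro x hx
    rw [my_fderiv_zero (fun hmm => hx (hts hmm))]
    simp
  have intfr : Integrable fun x => ‖fderiv ℝ r x‖^2 := mk_int cfr zfr
  have intfs : Integrable fun x => ‖fderiv ℝ s x‖^2 := mk_int cfs zfs
  have stepE : (∫ x in Ω, Su x)
      = (∫ x in Ω, ‖fderiv ℝ r x‖^2) + ∫ x in Ω, ‖fderiv ℝ s x‖^2 := by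
    rw [← integral_add intfr.integrableOn intfs.integrableOn]
    apply integral_congr_ae
    apply Filter.Eventually.of_forall
    intro x
    simp only [hSudef, hnr x, hns x]
  -- Step F : lam1 bounds
  have hlr := my_lam1_le hrc hrs (htr.trans hsupp)
  have hls := my_lam1_le hsc hss (hts.trans hsupp)
  -- Step G
  have cr2 : Continuous fun x => r x^2 := cr.pow 2
  have cs2 : Continuous fun x => s x^2 := cs'.pow 2
  have zr2 : ∀ x, x ∉ tsupport u → r x^2 = 0 := fun x hx => by rw [zr x hx]; ring
  have zs2 : ∀ x, x ∉ tsupport u → s x^2 = 0 := fun x hx => by rw [zs x hx]; ring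
  have intr2 : Integrable fun x => r x^2 := mk_int cr2 zr2
  have ints2 : Integrable fun x => s x^2 := mk_int cs2 zs2
  have intr2s2 : Integrable fun x => r x^2 + s x^2 := intr2.add ints2
  have intf2g2 : Integrable fun x => f x^2 + g x^2 :=
    mk_int ((cf.pow 2).add (cg.pow 2))
      (fun x hx => by rw [zf x hx, zg x hx]; ring)
  have stepG : Real.exp (2*m) * (∫ x in Ω, (f x^2 + g x^2)) ≤ ∫ x in Ω, (r x^2 + s x^2) := by
    rw [← integral_const_mul]
    apply setIntegral_mono_on (intf2g2.integrableOn.const_mul _) intr2s2.integrableOn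
      hΩ.measurableSet
    intro x hx
    have hmx : m ≤ Ψ x := csInf_le hBelow ⟨x, hx, rfl⟩
    have hrs2 : r x^2 + s x^2 = Real.exp (Ψ x + Ψ x) * (f x^2 + g x^2) := by
      simp only [hrdef, hsdef, hφdef, Real.exp_add]
      ring
    rw [hrs2]
    apply mul_le_mul_of_nonneg_right _ (by positivity)
    apply Real.exp_le_exp.2
    linarith
  have hsplit_rs : (∫ x in Ω, (r x^2 + s x^2)) = (∫ x in Ω, r x^2) + ∫ x in Ω, s x^2 :=
    integral_add intr2.integrableOn ints2.integrableOn
  -- rewrite the statement integrals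
  have hstmt1 : (∫ x in Ω,
        (‖-Complex.I * pd 0 u x + ((-(pdR 1 Ψ x) : ℝ) : ℂ) * u x‖ ^ 2 +
          ‖-Complex.I * pd 1 u x + ((pdR 0 Ψ x : ℝ) : ℂ) * u x‖ ^ 2)) = ∫ x in Ω, L x := by
    apply integral_congr_ae
    apply Filter.Eventually.of_forall
    intro x
    beta_reduce
    rw [my_norm_expr, my_norm_expr,
      ← my_pd_re hud 0 x, ← my_pd_im hud 0 x, ← my_pd_re hud 1 x, ← my_pd_im hud 1 x]
  have hstmt2 : (∫ x in Ω, (pdR 0 (pdR 0 Ψ) x + pdR 1 (pdR 1 Ψ) x) * ‖u x‖ ^ 2)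
      = ∫ x in Ω, Bi x := by
    apply integral_congr_ae
    apply Filter.Eventually.of_forall
    intro x
    beta_reduce
    rw [my_norm_sq_c]
    simp only [hBidef, hfdef, hgdef]
    ring
  have hstmt3 : (∫ x in Ω, ‖u x‖ ^ 2) = ∫ x in Ω, (f x^2 + g x^2) := by
    apply integral_congr_ae
    apply Filter.Eventually.of_forall
    intro x
    beta_reduce
    rw [my_norm_sq_c]
  rw [hstmt1, hstmt2, hstmt3, ge_iff_le, stepA]
  have hlam := my_lam1_nonneg Ω
  calc Real.exp (-2 * (M - m)) * lam1 Ω * ∫ x in Ω, (f x^2 + g x^2)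
      = Real.exp (-(2*M)) * (lam1 Ω * (Real.exp (2*m) * ∫ x in Ω, (f x^2 + g x^2))) := by
        rw [show (-2 * (M - m)) = -(2*M) + 2*m by ring, Real.exp_add]
        ring
    _ ≤ Real.exp (-(2*M)) * (lam1 Ω * ∫ x in Ω, (r x^2 + s x^2)) := by
        apply mul_le_mul_of_nonneg_left _ (Real.exp_pos _).le
        exact mul_le_mul_of_nonneg_left stepG hlam
    _ = Real.exp (-(2*M)) * (lam1 Ω * (∫ x in Ω, r x^2) + lam1 Ω * ∫ x in Ω, s x^2) := by
        rw [hsplit_rs]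
        ring
    _ ≤ Real.exp (-(2*M)) * ((∫ x in Ω, ‖fderiv ℝ r x‖^2) + ∫ x in Ω, ‖fderiv ℝ s x‖^2) :=
        mul_le_mul_of_nonneg_left (add_le_add hlr hls) (Real.exp_pos _).le
    _ = Real.exp (-(2*M)) * ∫ x in Ω, Su x := by rw [stepE]
    _ = Real.exp (-(2*M)) * ∫ x in Ω, V x := by rw [stepD]
    _ ≤ ∫ x in Ω, W x := stepC

end
end

section
/- Under the hypotheses of the ground state representation, one also has the bound with opposite sign: ∫_Ω |(−i∇+A)u|² dx + ∫_Ω B|u|² dx ≥ e^{−2·Osc(Ω,Ψ)} · λ₁(Ω,0) · ∫_Ω |u|² dx for all u ∈ C_c^∞(Ω;ℂ), obtained by the substitution u = w·e^{Ψ} and the identity ∫_Ω |(−i∇+A)u|² dx + ∫_Ω B|u|² dx = ∫_Ω e^{2Ψ}|(−i∂₁+∂₂)w|² dx. -/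
open MeasureTheory Complex ComplexConjugate

noncomputable section

abbrev E2 := EuclideanSpace ℝ (Fin 2)

section Aux

lemma hcs_of_subset {𝕍 𝕎 : Type*} [NormedAddCommGroup 𝕍] [NormedAddCommGroup 𝕎] {h : E2 → 𝕎} {u : E2 → 𝕍}
    (hcs : HasCompactSupport u)
    (hsub : Function.support h ⊆ tsupport u) : HasCompactSupport h :=
  IsCompact.of_isClosed_subset hcs isClosed_closure
    (closure_minimal hsub (isClosed_tsupport u))

lemma integrable_of_supp {𝕍 : Type*} [NormedAddCommGroup 𝕍] {h : E2 → ℝ} (hh : Continuous h)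
    {u : E2 → 𝕍} (hcs : HasCompactSupport u) (hsub : Function.support h ⊆ tsupport u) :
    Integrable h volume :=
  hh.integrable_of_hasCompactSupport (hcs_of_subset hcs hsub)

lemma setInt_eq {𝕍 : Type*} [NormedAddCommGroup 𝕍] {Ω : Set E2} {h : E2 → ℝ} {u : E2 → 𝕍}
    (hsupp : tsupport u ⊆ Ω) (hsub : Function.support h ⊆ tsupport u) :
    ∫ x in Ω, h x = ∫ x, h x := by
  apply setIntegral_eq_integral_of_forall_compl_eq_zero
  intro x hx
  by_contra hne
  exact hx (hsupp (hsub hne))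

lemma fderiv_zero_of_nmem {𝕍 : Type*} [NormedAddCommGroup 𝕍] [NormedSpace ℝ 𝕍]
    {g : E2 → 𝕍} {x : E2} (hx : x ∉ tsupport g) : fderiv ℝ g x = 0 := by
  by_contra h
  exact hx (support_fderiv_subset ℝ h)

lemma contDiff_pdR_s13 {g : E2 → ℝ} (hg : ContDiff ℝ (⊤ : ℕ∞) g) (v : E2) :
    ContDiff ℝ (⊤ : ℕ∞) (fun x => fderiv ℝ g x v) :=
  (hg.fderiv_right (by simp)).clm_apply contDiff_const

lemma integral_fderiv_apply_zero {g : E2 → ℝ} (hg : ContDiff ℝ (⊤ : ℕ∞) g)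
    (hc : HasCompactSupport g) (v : E2) : ∫ x, fderiv ℝ g x v = 0 := by
  have hgd : Continuous (fun x => fderiv ℝ g x v) := (contDiff_pdR_s13 hg v).continuous
  have hsub : Function.support (fun x => fderiv ℝ g x v) ⊆ tsupport g := by
    intro x hx
    by_contra hni
    simp only [Function.mem_support, ne_eq] at hx
    rw [fderiv_zero_of_nmem hni] at hx
    simp at hx
  have h2 : Integrable (fun x => fderiv ℝ g x v) volume :=
    integrable_of_supp hgd hc hsub
  have h1 : Integrable (fun x => fderiv ℝ (fun _ : E2 => (1:ℝ)) x v * g x) volume := by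
    simp [fderiv_fun_const]
  have h3 : Integrable (fun x => (1:ℝ) * fderiv ℝ g x v) volume := by simpa using h2
  have h4 : Integrable (fun x : E2 => (1:ℝ) * g x) volume := by
    simpa using hg.continuous.integrable_of_hasCompactSupport hc
  have := integral_mul_fderiv_eq_neg_fderiv_mul_of_integrable h1 h3 h4
    (fun x _ => (differentiable_const (1:ℝ)) x) (fun x _ => hg.differentiable (by simp) x) (v := v)
  simpa [fderiv_fun_const] using this

variable {𝕍 : Type*} [NormedAddCommGroup 𝕍] [NormedSpace ℝ 𝕍]

lemma hasFDerivAt_pdv {v : E2 → 𝕍} (hv : ContDiff ℝ (⊤ : ℕ∞) v) (w : E2) (x : E2) :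
    HasFDerivAt (fun y => fderiv ℝ v y w)
      ((ContinuousLinearMap.apply ℝ 𝕍 w).comp (fderiv ℝ (fderiv ℝ v) x)) x := by
  have h : HasFDerivAt (fderiv ℝ v) (fderiv ℝ (fderiv ℝ v) x) x :=
    ((hv.fderiv_right (m := (⊤ : ℕ∞)) (by simp)).differentiable (by simp) x).hasFDerivAt
  exact (ContinuousLinearMap.apply ℝ 𝕍 w).hasFDerivAt.comp x h

lemma sym2 {v : E2 → 𝕍} (hv : ContDiff ℝ (⊤ : ℕ∞) v) (x : E2) (a b : E2) :
    fderiv ℝ (fderiv ℝ v) x a b = fderiv ℝ (fderiv ℝ v) x b a := by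
  apply second_derivative_symmetric (f := v) (fun y => ((hv.differentiable (by simp)) y).hasFDerivAt)
  exact ((hv.fderiv_right (m := (⊤ : ℕ∞)) (by simp)).differentiable (by simp) x).hasFDerivAt

lemma star_ptwise (Φ : E2 → ℝ) (hΦ : ContDiff ℝ (⊤ : ℕ∞) Φ) (v : E2 → ℂ) (hv : ContDiff ℝ (⊤ : ℕ∞) v) (x : E2) :
    pdR 0 (fun y => pdR 0 Φ y * ((v y) * conj (v y)).re + ((pd 1 v y) * conj (v y)).im) x
      + pdR 1 (fun y => pdR 1 Φ y * ((v y) * conj (v y)).re - ((pd 0 v y) * conj (v y)).im) x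
    = (pdR 0 (pdR 0 Φ) x + pdR 1 (pdR 1 Φ) x) * ((v x) * conj (v x)).re
      + 2 * pdR 0 Φ x * ((pd 0 v x) * conj (v x)).re
      + 2 * pdR 1 Φ x * ((pd 1 v x) * conj (v x)).re
      - 2 * ((pd 0 v x) * conj (pd 1 v x)).im := by
  have e0 : E2 := EuclideanSpace.single 0 1
  simp only [pd, pdR]
  have hvx : HasFDerivAt v (fderiv ℝ v x) x := (hv.differentiable (by simp) x).hasFDerivAt
  have hconj : HasFDerivAt (fun y => conj (v y))
      ((Complex.conjCLE.toContinuousLinearMap).comp (fderiv ℝ v x)) x :=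
    Complex.conjCLE.toContinuousLinearMap.hasFDerivAt.comp x hvx
  have hΦ0 := hasFDerivAt_pdv hΦ (EuclideanSpace.single 0 1) x
  have hΦ1 := hasFDerivAt_pdv hΦ (EuclideanSpace.single 1 1) x
  have hpd0 := hasFDerivAt_pdv hv (EuclideanSpace.single 0 1) x
  have hpd1 := hasFDerivAt_pdv hv (EuclideanSpace.single 1 1) x
  have hre : HasFDerivAt (fun y => ((v y) * conj (v y)).re)
      (Complex.reCLM.comp (((v x) • ((Complex.conjCLE.toContinuousLinearMap).comp (fderiv ℝ v x))
        + (conj (v x)) • (fderiv ℝ v x)))) x :=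
    Complex.reCLM.hasFDerivAt.comp x (hvx.mul hconj)
  have hG1 : HasFDerivAt
      (fun y => fderiv ℝ Φ y (EuclideanSpace.single 0 1) * ((v y) * conj (v y)).re
        + ((fderiv ℝ v y (EuclideanSpace.single 1 1)) * conj (v y)).im) _ x :=
    (hΦ0.mul hre).add (Complex.imCLM.hasFDerivAt.comp x (hpd1.mul hconj))
  have hG2 : HasFDerivAt
      (fun y => fderiv ℝ Φ y (EuclideanSpace.single 1 1) * ((v y) * conj (v y)).re
        - ((fderiv ℝ v y (EuclideanSpace.single 0 1)) * conj (v y)).im) _ x :=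
    (hΦ1.mul hre).sub (Complex.imCLM.hasFDerivAt.comp x (hpd0.mul hconj))
  rw [show pdR (0:Fin 2) Φ = fun y => fderiv ℝ Φ y (EuclideanSpace.single 0 1) from rfl,
    show pdR (1:Fin 2) Φ = fun y => fderiv ℝ Φ y (EuclideanSpace.single 1 1) from rfl]
  rw [hG1.fderiv, hG2.fderiv, (hasFDerivAt_pdv hΦ (EuclideanSpace.single 0 1) x).fderiv,
    (hasFDerivAt_pdv hΦ (EuclideanSpace.single 1 1) x).fderiv]
  have hsym := sym2 hv x (EuclideanSpace.single 0 1) (EuclideanSpace.single 1 1)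
  simp only [ContinuousLinearMap.add_apply, ContinuousLinearMap.smul_apply,
    ContinuousLinearMap.coe_comp', Function.comp_apply, ContinuousLinearMap.apply_apply,
    ContinuousLinearMap.sub_apply, ContinuousLinearEquiv.coe_coe, Complex.conjCLE_apply,
    Complex.reCLM_apply, Complex.imCLM_apply, smul_eq_mul, Complex.real_smul]
  rw [hsym]
  simp only [Complex.mul_re, Complex.mul_im, Complex.conj_re, Complex.conj_im, Complex.add_re,
    Complex.add_im, Complex.ofReal_re, Complex.ofReal_im]
  ring

lemma contDiff_pdv {v : E2 → 𝕍} (hv : ContDiff ℝ (⊤ : ℕ∞) v) (w : E2) :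
    ContDiff ℝ (⊤ : ℕ∞) (fun x => fderiv ℝ v x w) :=
  (hv.fderiv_right (by simp)).clm_apply contDiff_const

lemma support_pdv {v : E2 → 𝕍} (w : E2) :
    Function.support (fun x => fderiv ℝ v x w) ⊆ tsupport v := by
  intro x hx
  by_contra hni
  simp only [Function.mem_support, ne_eq] at hx
  have h0 : fderiv ℝ v x = 0 := fderiv_zero_of_nmem hni
  rw [h0] at hx
  simp at hx

lemma norm_fderiv_sq (L : E2 →L[ℝ] ℝ) :
    ‖L‖^2 = (L (EuclideanSpace.single 0 1))^2 + (L (EuclideanSpace.single 1 1))^2 := by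
  set y := (InnerProductSpace.toDual ℝ E2).symm L with hy
  have hnorm : ‖L‖ = ‖y‖ := ((InnerProductSpace.toDual ℝ E2).symm.norm_map L).symm
  have happ : ∀ v : E2, L v = inner ℝ y v := by
    intro v
    rw [hy]
    exact (InnerProductSpace.toDual_symm_apply).symm
  have h1 : ∀ i : Fin 2, L (EuclideanSpace.single i 1) = y i := by
    intro i
    rw [happ]
    simp [PiLp.inner_apply, EuclideanSpace.single_apply]
  rw [h1 0, h1 1, hnorm]
  rw [EuclideanSpace.norm_eq]
  rw [Real.sq_sqrt (by positivity)]
  simp [Fin.sum_univ_two, sq_abs]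

set_option maxHeartbeats 1000000 in
lemma star_integral (Ω : Set E2) (Φ : E2 → ℝ) (hΦ : ContDiff ℝ (⊤ : ℕ∞) Φ)
    (v : E2 → ℂ) (hv : ContDiff ℝ (⊤ : ℕ∞) v) (hcsv : HasCompactSupport v)
    (hsuppv : tsupport v ⊆ Ω) :
    ∫ x in Ω, ((pdR 0 (pdR 0 Φ) x + pdR 1 (pdR 1 Φ) x) * ((v x) * conj (v x)).re
      + 2 * pdR 0 Φ x * ((pd 0 v x) * conj (v x)).re
      + 2 * pdR 1 Φ x * ((pd 1 v x) * conj (v x)).re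
      - 2 * ((pd 0 v x) * conj (pd 1 v x)).im) = 0 := by
  have hconj : ContDiff ℝ (⊤ : ℕ∞) (fun y => conj (v y)) :=
    Complex.conjCLE.toContinuousLinearMap.contDiff.comp hv
  have hpd : ∀ j : Fin 2, ContDiff ℝ (⊤ : ℕ∞) (pd j v) := fun j => contDiff_pdv hv _
  set G1 : E2 → ℝ :=
    fun y => pdR 0 Φ y * ((v y) * conj (v y)).re + ((pd 1 v y) * conj (v y)).im with hG1def
  set G2 : E2 → ℝ :=
    fun y => pdR 1 Φ y * ((v y) * conj (v y)).re - ((pd 0 v y) * conj (v y)).im with hG2def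
  have hG1s : ContDiff ℝ (⊤ : ℕ∞) G1 := by
    apply ContDiff.add
    · exact (contDiff_pdv hΦ _).mul (Complex.reCLM.contDiff.comp (hv.mul hconj))
    · exact Complex.imCLM.contDiff.comp ((hpd 1).mul hconj)
  have hG2s : ContDiff ℝ (⊤ : ℕ∞) G2 := by
    apply ContDiff.sub
    · exact (contDiff_pdv hΦ _).mul (Complex.reCLM.contDiff.comp (hv.mul hconj))
    · exact Complex.imCLM.contDiff.comp ((hpd 0).mul hconj)
  have hsubv : ∀ y, y ∉ tsupport v → (v y = 0 ∧ pd 0 v y = 0 ∧ pd 1 v y = 0) := by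
    intro y hy
    refine ⟨image_eq_zero_of_notMem_tsupport hy, ?_, ?_⟩ <;>
      · show fderiv ℝ v y _ = 0
        rw [fderiv_zero_of_nmem hy]; rfl
  have hG1sub : Function.support G1 ⊆ tsupport v := by
    intro y hy
    by_contra hni
    obtain ⟨h0, h1, h2⟩ := hsubv y hni
    simp [hG1def, h0, h1, h2] at hy
  have hG2sub : Function.support G2 ⊆ tsupport v := by
    intro y hy
    by_contra hni
    obtain ⟨h0, h1, h2⟩ := hsubv y hni
    simp [hG2def, h0, h1, h2] at hy
  have hG1cs : HasCompactSupport G1 := hcs_of_subset hcsv hG1sub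
  have hG2cs : HasCompactSupport G2 := hcs_of_subset hcsv hG2sub
  have key : ∀ x, (pdR 0 (pdR 0 Φ) x + pdR 1 (pdR 1 Φ) x) * ((v x) * conj (v x)).re
      + 2 * pdR 0 Φ x * ((pd 0 v x) * conj (v x)).re
      + 2 * pdR 1 Φ x * ((pd 1 v x) * conj (v x)).re
      - 2 * ((pd 0 v x) * conj (pd 1 v x)).im
      = pdR 0 G1 x + pdR 1 G2 x := fun x => (star_ptwise Φ hΦ v hv x).symm
  calc ∫ x in Ω, ((pdR 0 (pdR 0 Φ) x + pdR 1 (pdR 1 Φ) x) * ((v x) * conj (v x)).re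
      + 2 * pdR 0 Φ x * ((pd 0 v x) * conj (v x)).re
      + 2 * pdR 1 Φ x * ((pd 1 v x) * conj (v x)).re
      - 2 * ((pd 0 v x) * conj (pd 1 v x)).im)
      = ∫ x in Ω, (pdR 0 G1 x + pdR 1 G2 x) := by
        simp only [key]
    _ = ∫ x, (pdR 0 G1 x + pdR 1 G2 x) := by
        apply setInt_eq (u := v) (hsupp := fun y hy => hsuppv hy)
        intro y hy
        by_contra hni
        apply hy
        show pdR 0 G1 y + pdR 1 G2 y = 0
        have h1 : pdR 0 G1 y = 0 := by
          have : y ∉ tsupport G1 := fun h => hni (closure_minimal hG1sub (isClosed_tsupport v) h)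
          show fderiv ℝ G1 y _ = 0
          rw [fderiv_zero_of_nmem this]; rfl
        have h2 : pdR 1 G2 y = 0 := by
          have : y ∉ tsupport G2 := fun h => hni (closure_minimal hG2sub (isClosed_tsupport v) h)
          show fderiv ℝ G2 y _ = 0
          rw [fderiv_zero_of_nmem this]; rfl
        rw [h1, h2, add_zero]
    _ = (∫ x, pdR 0 G1 x) + ∫ x, pdR 1 G2 x := by
        apply integral_add
        · exact integrable_of_supp (contDiff_pdv hG1s _).continuous hG1cs (support_pdv _)
        · exact integrable_of_supp (contDiff_pdv hG2s _).continuous hG2cs (support_pdv _)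
    _ = 0 := by
        have z1 : (∫ x, pdR 0 G1 x) = 0 := integral_fderiv_apply_zero hG1s hG1cs _
        have z2 : (∫ x, pdR 1 G2 x) = 0 := integral_fderiv_apply_zero hG2s hG2cs _
        rw [z1, z2, add_zero]

lemma normsq' (z : ℂ) : ‖z‖^2 = z.re^2 + z.im^2 := by
  rw [Complex.sq_norm, Complex.normSq_apply]; ring

lemma algXY (D0 D1 U : ℂ) (a b : ℝ) :
    ‖-Complex.I*(D0 - (a:ℂ)*U) + (D1 - (b:ℂ)*U)‖^2
    = ‖-Complex.I*D0 + ((-b : ℝ):ℂ)*U‖^2 + ‖-Complex.I*D1 + ((a:ℝ):ℂ)*U‖^2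
      + 2*((-Complex.I*D0 + ((-b:ℝ):ℂ)*U) * conj (-Complex.I*D1 + ((a:ℝ):ℂ)*U)).im := by
  simp only [normsq', Complex.add_re, Complex.add_im, Complex.sub_re, Complex.sub_im,
    Complex.mul_re, Complex.mul_im, Complex.neg_re, Complex.neg_im, Complex.I_re, Complex.I_im,
    Complex.ofReal_re, Complex.ofReal_im, Complex.conj_re, Complex.conj_im, Complex.ofReal_neg]
  ring

lemma algB (c a b : ℝ) (D0 D1 U : ℂ) :
    c * (U * conj U).re - 2*((-Complex.I*D0 + ((-b:ℝ):ℂ)*U) * conj (-Complex.I*D1 + ((a:ℝ):ℂ)*U)).im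
    = c * (U * conj U).re + 2*a*(D0 * conj U).re + 2*b*(D1 * conj U).re
      - 2*(D0 * conj D1).im := by
  simp only [Complex.add_re, Complex.add_im, Complex.mul_re, Complex.mul_im, Complex.neg_re,
    Complex.neg_im, Complex.I_re, Complex.I_im, Complex.ofReal_re, Complex.ofReal_im,
    Complex.conj_re, Complex.conj_im, Complex.ofReal_neg]
  ring

lemma algZ (p0 p1 : ℂ) :
    ‖-Complex.I*p0 + p1‖^2 = ‖p0‖^2 + ‖p1‖^2 + 2*(p0 * conj p1).im := by
  simp only [normsq', Complex.add_re, Complex.add_im, Complex.mul_re, Complex.mul_im,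
    Complex.neg_re, Complex.neg_im, Complex.I_re, Complex.I_im, Complex.conj_re, Complex.conj_im]
  ring

lemma norm_u_sq (z : ℂ) : ‖z‖^2 = (z * conj z).re := by
  rw [normsq']; simp [Complex.mul_re, Complex.conj_re, Complex.conj_im]; ring

lemma contDiff_expPsi {Ψ : E2 → ℝ} (hΨ : ContDiff ℝ (⊤ : ℕ∞) Ψ) :
    ContDiff ℝ (⊤ : ℕ∞) (fun y => Complex.exp (-(Ψ y : ℂ))) :=
  (Complex.contDiff_exp (𝕜 := ℝ)).comp ((Complex.ofRealCLM.contDiff.comp hΨ).neg)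

lemma hasFDerivAt_expPsi {Ψ : E2 → ℝ} (hΨ : ContDiff ℝ (⊤ : ℕ∞) Ψ) (x : E2) :
    HasFDerivAt (fun y => Complex.exp (-(Ψ y : ℂ)))
      (Complex.exp (-(Ψ x : ℂ)) • (-(Complex.ofRealCLM.comp (fderiv ℝ Ψ x)))) x := by
  have h1 : HasFDerivAt (fun y => -(Ψ y : ℂ)) (-(Complex.ofRealCLM.comp (fderiv ℝ Ψ x))) x :=
    (Complex.ofRealCLM.hasFDerivAt.comp x ((hΨ.differentiable (by simp) x).hasFDerivAt)).neg
  exact h1.cexp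

lemma pd_w {Ψ : E2 → ℝ} (hΨ : ContDiff ℝ (⊤ : ℕ∞) Ψ) {u : E2 → ℂ} (hu : ContDiff ℝ (⊤ : ℕ∞) u)
    (i : Fin 2) (x : E2) :
    pd i (fun y => u y * Complex.exp (-(Ψ y : ℂ))) x
      = Complex.exp (-(Ψ x : ℂ)) * (pd i u x - (pdR i Ψ x : ℂ) * u x) := by
  have hux : HasFDerivAt u (fderiv ℝ u x) x := (hu.differentiable (by simp) x).hasFDerivAt
  have H : HasFDerivAt (fun y => u y * Complex.exp (-(Ψ y : ℂ)))
      (u x • (Complex.exp (-(Ψ x : ℂ)) • (-(Complex.ofRealCLM.comp (fderiv ℝ Ψ x))))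
        + Complex.exp (-(Ψ x : ℂ)) • fderiv ℝ u x) x :=
    hux.mul (hasFDerivAt_expPsi hΨ x)
  show fderiv ℝ _ x _ = _
  rw [H.fderiv]
  simp only [pd, pdR, ContinuousLinearMap.add_apply, ContinuousLinearMap.smul_apply,
    ContinuousLinearMap.neg_apply, ContinuousLinearMap.coe_comp', Function.comp_apply,
    Complex.ofRealCLM_apply, smul_eq_mul]
  ring

lemma lam1_set_nonneg (Ω : Set E2) (hΩ : MeasurableSet Ω) : ∀ r ∈ {r : ℝ | ∃ w : E2 → ℝ,
    ContDiff ℝ (⊤ : ℕ∞) w ∧ HasCompactSupport w ∧ tsupport w ⊆ Ω ∧ w ≠ 0 ∧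
    r = (∫ x in Ω, ‖fderiv ℝ w x‖ ^ 2) / (∫ x in Ω, (w x) ^ 2)}, 0 ≤ r := by
  rintro r ⟨w, _, _, _, _, rfl⟩
  apply div_nonneg
  · exact setIntegral_nonneg hΩ fun x _ => by positivity
  · exact setIntegral_nonneg hΩ fun x _ => by positivity

lemma lam1_nonneg (Ω : Set E2) (hΩ : MeasurableSet Ω) {F : E2 → ℝ} (hF : ContDiff ℝ (⊤ : ℕ∞) F)
    (hc : HasCompactSupport F) (hs : tsupport F ⊆ Ω) (hne : F ≠ 0) : 0 ≤ lam1 Ω :=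
  le_csInf ⟨_, ⟨F, hF, hc, hs, hne, rfl⟩⟩ (lam1_set_nonneg Ω hΩ)

lemma lam1_mul_le (Ω : Set E2) (hΩ : MeasurableSet Ω) {F : E2 → ℝ} (hF : ContDiff ℝ (⊤ : ℕ∞) F)
    (hc : HasCompactSupport F) (hs : tsupport F ⊆ Ω) :
    lam1 Ω * ∫ x in Ω, (F x)^2 ≤ ∫ x in Ω, ‖fderiv ℝ F x‖^2 := by
  by_cases hne : F = 0
  · have h1 : (fun x => (F x)^2) = fun _ => (0:ℝ) := by
      funext x; rw [hne]; simp
    have h2 : ∀ x, ‖fderiv ℝ F x‖^2 = ‖fderiv ℝ (fun _ : E2 => (0:ℝ)) x‖^2 := by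
      intro x; rw [hne]; rfl
    simp only [h1, h2, fderiv_fun_const]
    simp
  · have hD : 0 < ∫ x in Ω, (F x)^2 := by
      have hsub : Function.support (fun x => (F x)^2) ⊆ tsupport F := by
        intro x hx
        apply subset_closure
        simp only [Function.mem_support, ne_eq] at hx ⊢
        intro h0; exact hx (by rw [h0]; ring)
      rw [setInt_eq (u := F) hs hsub]
      rw [integral_pos_iff_support_of_nonneg_ae (f := fun x => F x ^ 2)
        (Filter.Eventually.of_forall fun x => by positivity)
        (integrable_of_supp (hF.continuous.pow 2) hc hsub)]
      have hsupp_eq : Function.support (fun x => (F x)^2) = Function.support F := by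
        ext x; simp [Function.mem_support, pow_eq_zero_iff]
      rw [hsupp_eq]
      exact hF.continuous.isOpen_support.measure_pos volume
        (Function.support_nonempty_iff.mpr hne)
    have hle : lam1 Ω ≤ (∫ x in Ω, ‖fderiv ℝ F x‖^2) / (∫ x in Ω, (F x)^2) :=
      csInf_le ⟨0, lam1_set_nonneg Ω hΩ⟩ ⟨F, hF, hc, hs, hne, rfl⟩
    calc lam1 Ω * ∫ x in Ω, (F x)^2
        ≤ ((∫ x in Ω, ‖fderiv ℝ F x‖^2) / (∫ x in Ω, (F x)^2)) * ∫ x in Ω, (F x)^2 := by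
          apply mul_le_mul_of_nonneg_right hle hD.le
      _ = ∫ x in Ω, ‖fderiv ℝ F x‖^2 := by field_simp

end Aux

set_option maxHeartbeats 2000000 in
theorem stmt_13 (Ω : Set (EuclideanSpace ℝ (Fin 2))) (hΩ : IsOpen Ω)
    (hbdd : Bornology.IsBounded Ω)
    (Ψ : EuclideanSpace ℝ (Fin 2) → ℝ) (hΨ : ContDiff ℝ (⊤ : ℕ∞) Ψ)
    (hAbove : BddAbove (Ψ '' Ω)) (hBelow : BddBelow (Ψ '' Ω))
    (u : EuclideanSpace ℝ (Fin 2) → ℂ) (hu : ContDiff ℝ (⊤ : ℕ∞) u)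
    (hcs : HasCompactSupport u) (hsupp : tsupport u ⊆ Ω) :
    ((∫ x in Ω,
        (‖-Complex.I * pd 0 u x + ((-(pdR 1 Ψ x) : ℝ) : ℂ) * u x‖ ^ 2 +
          ‖-Complex.I * pd 1 u x + ((pdR 0 Ψ x : ℝ) : ℂ) * u x‖ ^ 2)) +
      (∫ x in Ω, (pdR 0 (pdR 0 Ψ) x + pdR 1 (pdR 1 Ψ) x) * ‖u x‖ ^ 2) =
    ∫ x in Ω, Real.exp (2 * Ψ x) *
      ‖-Complex.I * pd 0 (fun y => u y * Complex.exp (-Ψ y)) x +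
        pd 1 (fun y => u y * Complex.exp (-Ψ y)) x‖ ^ 2) ∧
    ((∫ x in Ω,
        (‖-Complex.I * pd 0 u x + ((-(pdR 1 Ψ x) : ℝ) : ℂ) * u x‖ ^ 2 +
          ‖-Complex.I * pd 1 u x + ((pdR 0 Ψ x : ℝ) : ℂ) * u x‖ ^ 2)) +
      (∫ x in Ω, (pdR 0 (pdR 0 Ψ) x + pdR 1 (pdR 1 Ψ) x) * ‖u x‖ ^ 2) ≥
    Real.exp (-2 * (sSup (Ψ '' Ω) - sInf (Ψ '' Ω))) * lam1 Ω * ∫ x in Ω, ‖u x‖ ^ 2) := by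
  classical
  set w : EuclideanSpace ℝ (Fin 2) → ℂ := fun y => u y * Complex.exp (-Ψ y) with hwdef
  set X : EuclideanSpace ℝ (Fin 2) → ℂ :=
    fun x => -Complex.I * pd 0 u x + ((-(pdR 1 Ψ x) : ℝ) : ℂ) * u x with hXdef
  set Y : EuclideanSpace ℝ (Fin 2) → ℂ :=
    fun x => -Complex.I * pd 1 u x + ((pdR 0 Ψ x : ℝ) : ℂ) * u x with hYdef
  set C : EuclideanSpace ℝ (Fin 2) → ℝ := fun x => 2 * (X x * conj (Y x)).im with hCdef
  -- continuity facts
  have cu : Continuous u := hu.continuous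
  have cpu : ∀ i : Fin 2, Continuous (pd i u) := fun i => (contDiff_pdv hu _).continuous
  have cΨi : ∀ i : Fin 2, Continuous (pdR i Ψ) := fun i => (contDiff_pdv hΨ _).continuous
  have cΨii : ∀ i j : Fin 2, Continuous (pdR i (pdR j Ψ)) := fun i j =>
    (contDiff_pdv (contDiff_pdv hΨ _) _).continuous
  have hw_smooth : ContDiff ℝ (⊤ : ℕ∞) w := hu.mul (contDiff_expPsi hΨ)
  have cw : Continuous w := hw_smooth.continuous
  have cpw : ∀ i : Fin 2, Continuous (pd i w) := fun i => (contDiff_pdv hw_smooth _).continuous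
  have cX : Continuous X :=
    (continuous_const.mul (cpu 0)).add ((Complex.continuous_ofReal.comp (cΨi 1).neg).mul cu)
  have cY : Continuous Y :=
    (continuous_const.mul (cpu 1)).add ((Complex.continuous_ofReal.comp (cΨi 0)).mul cu)
  -- support facts
  have hu0 : ∀ y, y ∉ tsupport u → u y = 0 := fun y hy => image_eq_zero_of_notMem_tsupport hy
  have hpu0 : ∀ (i : Fin 2) y, y ∉ tsupport u → pd i u y = 0 := by
    intro i y hy
    show fderiv ℝ u y _ = 0
    rw [fderiv_zero_of_nmem hy]; rfl
  have hX0 : ∀ y, y ∉ tsupport u → X y = 0 := by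
    intro y hy; rw [hXdef]; simp [hu0 y hy, hpu0 0 y hy]
  have hY0 : ∀ y, y ∉ tsupport u → Y y = 0 := by
    intro y hy; rw [hYdef]; simp [hu0 y hy, hpu0 1 y hy]
  -- pointwise formula for pd i w
  have hpw : ∀ (i : Fin 2) x, pd i w x
      = Complex.exp (-(Ψ x : ℂ)) * (pd i u x - (pdR i Ψ x : ℂ) * u x) :=
    fun i x => pd_w hΨ hu i x
  have hpw0 : ∀ (i : Fin 2) y, y ∉ tsupport u → pd i w y = 0 := by
    intro i y hy; rw [hpw i y, hu0 y hy, hpu0 i y hy]; simp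
  -- the exp cancellation
  have hexp2 : ∀ t : ℝ, Real.exp (2 * t) * ‖Complex.exp (-(t : ℂ))‖ ^ 2 = 1 := by
    intro t
    rw [Complex.norm_exp]
    simp only [Complex.neg_re, Complex.ofReal_re]
    rw [sq, ← Real.exp_add, ← Real.exp_add, show 2*t + (-t + -t) = 0 by ring, Real.exp_zero]
  -- pointwise identity: F3 = F1 + C
  have hRptw : ∀ x, Real.exp (2 * Ψ x) * ‖-Complex.I * pd 0 w x + pd 1 w x‖ ^ 2
      = (‖X x‖ ^ 2 + ‖Y x‖ ^ 2) + C x := by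
    intro x
    rw [hpw 0 x, hpw 1 x]
    have : -Complex.I * (Complex.exp (-(Ψ x : ℂ)) * (pd 0 u x - (pdR 0 Ψ x : ℂ) * u x))
        + Complex.exp (-(Ψ x : ℂ)) * (pd 1 u x - (pdR 1 Ψ x : ℂ) * u x)
        = Complex.exp (-(Ψ x : ℂ)) * (-Complex.I * (pd 0 u x - (pdR 0 Ψ x : ℂ) * u x)
            + (pd 1 u x - (pdR 1 Ψ x : ℂ) * u x)) := by ring
    rw [this, norm_mul, mul_pow, ← mul_assoc, hexp2 (Ψ x), one_mul]
    rw [hCdef, hXdef, hYdef]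
    have := algXY (pd 0 u x) (pd 1 u x) (u x) (pdR 0 Ψ x) (pdR 1 Ψ x)
    simp only [Complex.ofReal_neg] at this ⊢
    linarith [this]
  -- pointwise identity: F2 - C = star integrand
  have hBptw : ∀ x, (pdR 0 (pdR 0 Ψ) x + pdR 1 (pdR 1 Ψ) x) * ‖u x‖ ^ 2 - C x
      = (pdR 0 (pdR 0 Ψ) x + pdR 1 (pdR 1 Ψ) x) * ((u x) * conj (u x)).re
        + 2 * pdR 0 Ψ x * ((pd 0 u x) * conj (u x)).re
        + 2 * pdR 1 Ψ x * ((pd 1 u x) * conj (u x)).re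
        - 2 * ((pd 0 u x) * conj (pd 1 u x)).im := by
    intro x
    rw [norm_u_sq (u x), hCdef, hXdef, hYdef]
    have := algB (pdR 0 (pdR 0 Ψ) x + pdR 1 (pdR 1 Ψ) x) (pdR 0 Ψ x) (pdR 1 Ψ x)
      (pd 0 u x) (pd 1 u x) (u x)
    simp only [Complex.ofReal_neg] at this ⊢
    linarith [this]
  -- integrability
  have hIF1 : Integrable (fun x => ‖X x‖ ^ 2 + ‖Y x‖ ^ 2) volume := by
    apply integrable_of_supp ((cX.norm.pow 2).add (cY.norm.pow 2)) hcs
    intro y hy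
    by_contra hni
    simp [hX0 y hni, hY0 y hni] at hy
  have hIC : Integrable C volume := by
    apply integrable_of_supp (continuous_const.mul (Complex.continuous_im.comp
      (cX.mul (Complex.conjCLE.continuous.comp cY)))) hcs
    intro y hy
    by_contra hni
    simp [hCdef, hX0 y hni] at hy
  have hIF2 : Integrable (fun x => (pdR 0 (pdR 0 Ψ) x + pdR 1 (pdR 1 Ψ) x) * ‖u x‖ ^ 2)
      volume := by
    apply integrable_of_supp (((cΨii 0 0).add (cΨii 1 1)).mul (cu.norm.pow 2)) hcs
    intro y hy
    by_contra hni
    simp [hu0 y hni] at hy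
  have part1 : (∫ x in Ω,
        (‖-Complex.I * pd 0 u x + ((-(pdR 1 Ψ x) : ℝ) : ℂ) * u x‖ ^ 2 +
          ‖-Complex.I * pd 1 u x + ((pdR 0 Ψ x : ℝ) : ℂ) * u x‖ ^ 2)) +
      (∫ x in Ω, (pdR 0 (pdR 0 Ψ) x + pdR 1 (pdR 1 Ψ) x) * ‖u x‖ ^ 2) =
      ∫ x in Ω, Real.exp (2 * Ψ x) * ‖-Complex.I * pd 0 w x + pd 1 w x‖ ^ 2 := by
    have h13 : ∫ x in Ω, Real.exp (2 * Ψ x) * ‖-Complex.I * pd 0 w x + pd 1 w x‖ ^ 2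
        = (∫ x in Ω, (‖X x‖ ^ 2 + ‖Y x‖ ^ 2)) + ∫ x in Ω, C x := by
      rw [show (fun x => Real.exp (2 * Ψ x) * ‖-Complex.I * pd 0 w x + pd 1 w x‖ ^ 2)
          = fun x => (‖X x‖ ^ 2 + ‖Y x‖ ^ 2) + C x from funext hRptw]
      exact integral_add hIF1.integrableOn hIC.integrableOn
    have h2C : ∫ x in Ω, (pdR 0 (pdR 0 Ψ) x + pdR 1 (pdR 1 Ψ) x) * ‖u x‖ ^ 2
        = ∫ x in Ω, C x := by
      have hz : ∫ x in Ω,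
          ((pdR 0 (pdR 0 Ψ) x + pdR 1 (pdR 1 Ψ) x) * ‖u x‖ ^ 2 - C x) = 0 := by
        rw [show (fun x => (pdR 0 (pdR 0 Ψ) x + pdR 1 (pdR 1 Ψ) x) * ‖u x‖ ^ 2 - C x)
            = fun x => ((pdR 0 (pdR 0 Ψ) x + pdR 1 (pdR 1 Ψ) x) * ((u x) * conj (u x)).re
              + 2 * pdR 0 Ψ x * ((pd 0 u x) * conj (u x)).re
              + 2 * pdR 1 Ψ x * ((pd 1 u x) * conj (u x)).re
              - 2 * ((pd 0 u x) * conj (pd 1 u x)).im) from funext hBptw]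
        exact star_integral Ω Ψ hΨ u hu hcs hsupp
      rw [integral_sub hIF2.integrableOn hIC.integrableOn] at hz
      linarith
    rw [h13, h2C]
  refine ⟨part1, ?_⟩
  rw [ge_iff_le, part1]
  by_cases huz : u = 0
  · have h4 : ∫ x in Ω, ‖u x‖ ^ 2 = 0 := by
      rw [show (fun x => ‖u x‖ ^ 2) = fun _ => (0:ℝ) by funext x; rw [huz]; simp]
      simp
    rw [h4, mul_zero]
    exact setIntegral_nonneg hΩ.measurableSet fun x _ => by positivity
  -- main case
  obtain ⟨x0, hux0⟩ := Function.ne_iff.mp huz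
  have hx0Ω : x0 ∈ Ω := hsupp (subset_closure (Function.mem_support.mpr hux0))
  have hm : ∀ x ∈ Ω, sInf (Ψ '' Ω) ≤ Ψ x := fun x hx => csInf_le hBelow ⟨x, hx, rfl⟩
  have hM : ∀ x ∈ Ω, Ψ x ≤ sSup (Ψ '' Ω) := fun x hx => le_csSup hAbove ⟨x, hx, rfl⟩
  set m := sInf (Ψ '' Ω) with hmdef
  set M := sSup (Ψ '' Ω) with hMdef
  -- support of w
  have hwsub : Function.support w ⊆ tsupport u := by
    intro y hy
    by_contra hni
    simp [hwdef, hu0 y hni] at hy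
  have hwcs : HasCompactSupport w := hcs_of_subset hcs hwsub
  have htwu : tsupport w ⊆ tsupport u := closure_minimal hwsub (isClosed_tsupport u)
  have hwsupp : tsupport w ⊆ Ω := htwu.trans hsupp
  -- real and imaginary parts
  set f : EuclideanSpace ℝ (Fin 2) → ℝ := fun x => (w x).re with hfdef
  set g : EuclideanSpace ℝ (Fin 2) → ℝ := fun x => (w x).im with hgdef
  have hf : ContDiff ℝ (⊤ : ℕ∞) f := Complex.reCLM.contDiff.comp hw_smooth
  have hg : ContDiff ℝ (⊤ : ℕ∞) g := Complex.imCLM.contDiff.comp hw_smooth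
  have hfsub : Function.support f ⊆ tsupport u := by
    intro y hy
    by_contra hni
    have := hu0 y hni
    simp [hfdef, hwdef, this] at hy
  have hgsub : Function.support g ⊆ tsupport u := by
    intro y hy
    by_contra hni
    have := hu0 y hni
    simp [hgdef, hwdef, this] at hy
  have hfc : HasCompactSupport f := hcs_of_subset hcs hfsub
  have hgc : HasCompactSupport g := hcs_of_subset hcs hgsub
  have htfu : tsupport f ⊆ tsupport u := closure_minimal hfsub (isClosed_tsupport u)
  have htgu : tsupport g ⊆ tsupport u := closure_minimal hgsub (isClosed_tsupport u)
  have hfsupp : tsupport f ⊆ Ω := htfu.trans hsupp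
  have hgsupp : tsupport g ⊆ Ω := htgu.trans hsupp
  -- derivatives of f, g
  have hpdf : ∀ (i : Fin 2) x, fderiv ℝ f x (EuclideanSpace.single i 1) = (pd i w x).re := by
    intro i x
    have hwx : HasFDerivAt w (fderiv ℝ w x) x := (hw_smooth.differentiable (by simp) x).hasFDerivAt
    have : HasFDerivAt f (Complex.reCLM.comp (fderiv ℝ w x)) x :=
      Complex.reCLM.hasFDerivAt.comp x hwx
    rw [this.fderiv]
    rfl
  have hpdg : ∀ (i : Fin 2) x, fderiv ℝ g x (EuclideanSpace.single i 1) = (pd i w x).im := by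
    intro i x
    have hwx : HasFDerivAt w (fderiv ℝ w x) x := (hw_smooth.differentiable (by simp) x).hasFDerivAt
    have : HasFDerivAt g (Complex.imCLM.comp (fderiv ℝ w x)) x :=
      Complex.imCLM.hasFDerivAt.comp x hwx
    rw [this.fderiv]
    rfl
  -- nonnegativity of lam1
  have hwx0 : w x0 ≠ 0 := mul_ne_zero hux0 (Complex.exp_ne_zero _)
  have hlam0 : 0 ≤ lam1 Ω := by
    by_cases hf0 : f = 0
    · refine lam1_nonneg Ω hΩ.measurableSet hg hgc hgsupp ?_
      intro hg0
      apply hwx0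
      have h1 : (w x0).re = 0 := by simpa [hfdef] using congrFun hf0 x0
      have h2 : (w x0).im = 0 := by simpa [hgdef] using congrFun hg0 x0
      exact Complex.ext h1 h2
    · exact lam1_nonneg Ω hΩ.measurableSet hf hfc hfsupp hf0
  -- integrability facts
  have hIF3 : Integrable (fun x => Real.exp (2 * Ψ x) *
      ‖-Complex.I * pd 0 w x + pd 1 w x‖ ^ 2) volume := by
    apply integrable_of_supp ((Real.continuous_exp.comp (continuous_const.mul hΨ.continuous)).mul
      (((continuous_const.mul (cpw 0)).add (cpw 1)).norm.pow 2)) hcs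
    intro y hy
    by_contra hni
    simp [hpw0 0 y hni, hpw0 1 y hni] at hy
  have hIZN : Integrable (fun x => ‖-Complex.I * pd 0 w x + pd 1 w x‖ ^ 2) volume := by
    apply integrable_of_supp ((((continuous_const.mul (cpw 0)).add (cpw 1)).norm.pow 2)) hcs
    intro y hy
    by_contra hni
    simp [hpw0 0 y hni, hpw0 1 y hni] at hy
  have hIP : Integrable (fun x => ‖pd 0 w x‖ ^ 2 + ‖pd 1 w x‖ ^ 2) volume := by
    apply integrable_of_supp (((cpw 0).norm.pow 2).add ((cpw 1).norm.pow 2)) hcs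
    intro y hy
    by_contra hni
    simp [hpw0 0 y hni, hpw0 1 y hni] at hy
  have hICw : Integrable (fun x => 2 * (pd 0 w x * conj (pd 1 w x)).im) volume := by
    apply integrable_of_supp (continuous_const.mul (Complex.continuous_im.comp
      ((cpw 0).mul (Complex.conjCLE.continuous.comp (cpw 1))))) hcs
    intro y hy
    by_contra hni
    simp [hpw0 0 y hni] at hy
  have hIdf : Integrable (fun x => ‖fderiv ℝ f x‖ ^ 2) volume := by
    apply integrable_of_supp ((hf.continuous_fderiv (by simp)).norm.pow 2) hcs
    intro y hy
    by_contra hni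
    have : y ∉ tsupport f := fun hc => hni (htfu hc)
    simp [fderiv_zero_of_nmem this] at hy
  have hIdg : Integrable (fun x => ‖fderiv ℝ g x‖ ^ 2) volume := by
    apply integrable_of_supp ((hg.continuous_fderiv (by simp)).norm.pow 2) hcs
    intro y hy
    by_contra hni
    have : y ∉ tsupport g := fun hc => hni (htgu hc)
    simp [fderiv_zero_of_nmem this] at hy
  have hIf2 : Integrable (fun x => (f x) ^ 2) volume := by
    apply integrable_of_supp (hf.continuous.pow 2) hcs
    intro y hy
    by_contra hni
    have := hu0 y hni
    simp [hfdef, hwdef, this] at hy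
  have hIg2 : Integrable (fun x => (g x) ^ 2) volume := by
    apply integrable_of_supp (hg.continuous.pow 2) hcs
    intro y hy
    by_contra hni
    have := hu0 y hni
    simp [hgdef, hwdef, this] at hy
  have hIw2 : Integrable (fun x => ‖w x‖ ^ 2) volume := by
    apply integrable_of_supp (cw.norm.pow 2) hcs
    intro y hy
    by_contra hni
    have : w y = 0 := by simp [hwdef, hu0 y hni]
    simp [this] at hy
  have hIu2 : Integrable (fun x => ‖u x‖ ^ 2) volume := by
    apply integrable_of_supp (cu.norm.pow 2) hcs
    intro y hy
    by_contra hni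
    simp [hu0 y hni] at hy
  -- step 1 : exp lower bound
  have step1 : Real.exp (2 * m) * ∫ x in Ω, ‖-Complex.I * pd 0 w x + pd 1 w x‖ ^ 2
      ≤ ∫ x in Ω, Real.exp (2 * Ψ x) * ‖-Complex.I * pd 0 w x + pd 1 w x‖ ^ 2 := by
    rw [← integral_const_mul]
    apply setIntegral_mono_on (hIZN.const_mul _).integrableOn hIF3.integrableOn
      hΩ.measurableSet
    intro x hx
    apply mul_le_mul_of_nonneg_right _ (by positivity)
    exact Real.exp_le_exp.mpr (by linarith [hm x hx])
  -- step 2 : expand the square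
  have step2 : ∫ x in Ω, ‖-Complex.I * pd 0 w x + pd 1 w x‖ ^ 2
      = (∫ x in Ω, (‖pd 0 w x‖ ^ 2 + ‖pd 1 w x‖ ^ 2))
        + ∫ x in Ω, 2 * (pd 0 w x * conj (pd 1 w x)).im := by
    rw [show (fun x => ‖-Complex.I * pd 0 w x + pd 1 w x‖ ^ 2)
        = fun x => (‖pd 0 w x‖ ^ 2 + ‖pd 1 w x‖ ^ 2) + 2 * (pd 0 w x * conj (pd 1 w x)).im by
      funext x; rw [algZ (pd 0 w x) (pd 1 w x)]]
    exact integral_add hIP.integrableOn hICw.integrableOn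
  -- step 3 : the cross term integrates to zero
  have step3 : ∫ x in Ω, 2 * (pd 0 w x * conj (pd 1 w x)).im = 0 := by
    have hstar := star_integral Ω (fun _ => (0:ℝ)) contDiff_const w hw_smooth hwcs hwsupp
    have hz : ∀ i : Fin 2, (pdR i (fun _ : EuclideanSpace ℝ (Fin 2) => (0:ℝ)))
        = (fun _ => (0:ℝ)) := by
      intro i; funext y
      simp [pdR, fderiv_fun_const]
    have heq : (fun x => (pdR 0 (pdR 0 (fun _ => (0:ℝ))) x + pdR 1 (pdR 1 (fun _ => (0:ℝ))) x)
          * ((w x) * conj (w x)).re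
        + 2 * pdR 0 (fun _ => (0:ℝ)) x * ((pd 0 w x) * conj (w x)).re
        + 2 * pdR 1 (fun _ => (0:ℝ)) x * ((pd 1 w x) * conj (w x)).re
        - 2 * ((pd 0 w x) * conj (pd 1 w x)).im)
        = fun x => -(2 * ((pd 0 w x) * conj (pd 1 w x)).im) := by
      funext x
      simp only [hz, pdR, fderiv_fun_const, ContinuousLinearMap.zero_apply, Pi.zero_apply]
      ring
    have hneg : ∫ x in Ω, -(2 * ((pd 0 w x) * conj (pd 1 w x)).im) = 0 := by
      rw [← heq]; exact hstar
    rw [integral_neg] at hneg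
    linarith [hneg]
  -- step 4 : Dirichlet energy splits into re and im parts
  have step4 : ∫ x in Ω, (‖pd 0 w x‖ ^ 2 + ‖pd 1 w x‖ ^ 2)
      = (∫ x in Ω, ‖fderiv ℝ f x‖ ^ 2) + ∫ x in Ω, ‖fderiv ℝ g x‖ ^ 2 := by
    rw [show (fun x => ‖pd 0 w x‖ ^ 2 + ‖pd 1 w x‖ ^ 2)
        = fun x => ‖fderiv ℝ f x‖ ^ 2 + ‖fderiv ℝ g x‖ ^ 2 by
      funext x
      rw [norm_fderiv_sq (fderiv ℝ f x), norm_fderiv_sq (fderiv ℝ g x),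
        hpdf 0 x, hpdf 1 x, hpdg 0 x, hpdg 1 x, normsq' (pd 0 w x), normsq' (pd 1 w x)]
      ring]
    exact integral_add hIdf.integrableOn hIdg.integrableOn
  -- step 5 : eigenvalue bound
  have step5f : lam1 Ω * ∫ x in Ω, (f x) ^ 2 ≤ ∫ x in Ω, ‖fderiv ℝ f x‖ ^ 2 :=
    lam1_mul_le Ω hΩ.measurableSet hf hfc hfsupp
  have step5g : lam1 Ω * ∫ x in Ω, (g x) ^ 2 ≤ ∫ x in Ω, ‖fderiv ℝ g x‖ ^ 2 :=
    lam1_mul_le Ω hΩ.measurableSet hg hgc hgsupp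
  -- step 6 : ∫ ‖w‖² = ∫ f² + ∫ g²
  have step6 : ∫ x in Ω, ‖w x‖ ^ 2 = (∫ x in Ω, (f x) ^ 2) + ∫ x in Ω, (g x) ^ 2 := by
    rw [show (fun x => ‖w x‖ ^ 2) = fun x => (f x) ^ 2 + (g x) ^ 2 by
      funext x; rw [normsq' (w x)]]
    exact integral_add hIf2.integrableOn hIg2.integrableOn
  -- step 7 : lower bound for ∫ ‖w‖²
  have hwnorm : ∀ x, ‖w x‖ ^ 2 = Real.exp (-(2 * Ψ x)) * ‖u x‖ ^ 2 := by
    intro x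
    rw [hwdef]
    show ‖u x * Complex.exp (-(Ψ x:ℂ))‖ ^ 2 = _
    rw [norm_mul, mul_pow, Complex.norm_exp]
    simp only [Complex.neg_re, Complex.ofReal_re]
    rw [sq (Real.exp (-Ψ x)), ← Real.exp_add, show -Ψ x + -Ψ x = -(2 * Ψ x) by ring]
    ring
  have step7 : Real.exp (-(2 * M)) * ∫ x in Ω, ‖u x‖ ^ 2 ≤ ∫ x in Ω, ‖w x‖ ^ 2 := by
    rw [← integral_const_mul]
    apply setIntegral_mono_on (hIu2.const_mul _).integrableOn hIw2.integrableOn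
      hΩ.measurableSet
    intro x hx
    rw [hwnorm x]
    apply mul_le_mul_of_nonneg_right _ (by positivity)
    exact Real.exp_le_exp.mpr (by linarith [hM x hx])
  -- nonnegativity facts
  have hu2nn : 0 ≤ ∫ x in Ω, ‖u x‖ ^ 2 := setIntegral_nonneg hΩ.measurableSet fun x _ => by
    positivity
  have hexpm : (0:ℝ) < Real.exp (2 * m) := Real.exp_pos _
  -- final chain
  have hExp : Real.exp (2 * m) * Real.exp (-(2 * M)) = Real.exp (-2 * (M - m)) := by
    rw [← Real.exp_add]; congr 1; ring
  calc Real.exp (-2 * (M - m)) * lam1 Ω * ∫ x in Ω, ‖u x‖ ^ 2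
      = Real.exp (2 * m) * (lam1 Ω * (Real.exp (-(2 * M)) * ∫ x in Ω, ‖u x‖ ^ 2)) := by
        rw [← hExp]; ring
    _ ≤ Real.exp (2 * m) * (lam1 Ω * ∫ x in Ω, ‖w x‖ ^ 2) := by
        apply mul_le_mul_of_nonneg_left _ hexpm.le
        exact mul_le_mul_of_nonneg_left step7 hlam0
    _ = Real.exp (2 * m) * ((lam1 Ω * ∫ x in Ω, (f x) ^ 2) + lam1 Ω * ∫ x in Ω, (g x) ^ 2) := by
        rw [step6]; ring
    _ ≤ Real.exp (2 * m) * ((∫ x in Ω, ‖fderiv ℝ f x‖ ^ 2) + ∫ x in Ω, ‖fderiv ℝ g x‖ ^ 2) := by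
        apply mul_le_mul_of_nonneg_left _ hexpm.le
        linarith [step5f, step5g]
    _ = Real.exp (2 * m) * ∫ x in Ω, ‖-Complex.I * pd 0 w x + pd 1 w x‖ ^ 2 := by
        rw [step2, step3, step4, add_zero]
    _ ≤ ∫ x in Ω, Real.exp (2 * Ψ x) * ‖-Complex.I * pd 0 w x + pd 1 w x‖ ^ 2 := step1

end
end
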